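/- arXiv:2012.10177 — 3 statements merged into one kernel-verified Lean document; each statement's English description precedes it below -/
import Mathlib

section
/- For every matrix A with nonnegative integer entries, RSK applied to the transpose A^t yields the pair (Q(A), P(A)), i.e. transposing the matrix swaps the insertion and recording tableaux. -/
namespace RSKPaper

/-- The shape of a tableau: its list of row lengths. -/
def shape (T : List (List ℕ)) : List ℕ := T.map List.length

/-- All entries of the tableau lie in `{1, ..., m}`. -/
def EntriesIn (T : List (List ℕ)) (m : ℕ) : Prop :=
  ∀ row ∈ T, ∀ x ∈ row, 1 ≤ x ∧ x ≤ m

/-- `T` is a semistandard Young tableau: rows are nonempty and weakly increasing,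
row lengths are weakly decreasing, and columns are strictly increasing. -/
def IsSSYT (T : List (List ℕ)) : Prop :=
  (∀ row ∈ T, row ≠ [] ∧ row.Pairwise (· ≤ ·)) ∧
  (∀ i, i + 1 < T.length →
    (T.getD (i+1) []).length ≤ (T.getD i []).length ∧
    ∀ k < (T.getD (i+1) []).length, (T.getD i []).getD k 0 < (T.getD (i+1) []).getD k 0)

/-- Schensted row insertion of `x` into a single row: returns the new row and
the bumped entry, if any. -/
def insRow (x : ℕ) : List ℕ → List ℕ × Option ℕ
  | [] => ([x], none)
  | a :: as =>
      if a ≤ x then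
        let p := insRow x as
        (a :: p.1, p.2)
      else (x :: as, some a)

/-- Schensted insertion of an entry into a tableau. -/
def insertT : List (List ℕ) → ℕ → List (List ℕ)
  | [], x => [[x]]
  | r :: rs, x =>
      match insRow x r with
      | (r', none) => r' :: rs
      | (r', some b) => r' :: insertT rs b

/-- Simultaneous insertion into the insertion tableau `P` and recording of the
label `lbl` at the new box of the recording tableau `Q`. -/
def insPQ : List (List ℕ) → List (List ℕ) → ℕ → ℕ → List (List ℕ) × List (List ℕ)
  | [], _, x, lbl => ([[x]], [[lbl]])
  | r :: rs, qs, x, lbl =>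
      match insRow x r with
      | (r', none) => (r' :: rs, (qs.headD [] ++ [lbl]) :: qs.tail)
      | (r', some b) =>
          let p := insPQ rs qs.tail b lbl
          (r' :: p.1, qs.headD [] :: p.2)

/-- One RSK step: insert the second coordinate, record the first. -/
def RSstep (PQ : List (List ℕ) × List (List ℕ)) (p : ℕ × ℕ) :
    List (List ℕ) × List (List ℕ) :=
  insPQ PQ.1 PQ.2 p.2 p.1

/-- The two-line array of a matrix: the pair `(i, j)` (1-based) appears with
multiplicity `A i j`, listed in lexicographic order. -/
def biword {r n : ℕ} (A : Matrix (Fin r) (Fin n) ℕ) : List (ℕ × ℕ) :=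
  (List.finRange r).flatMap fun i =>
    (List.finRange n).flatMap fun j =>
      List.replicate (A i j) (i.val + 1, j.val + 1)

/-- The Robinson–Schensted–Knuth correspondence: `RSK A = (P A, Q A)`. -/
def RSK {r n : ℕ} (A : Matrix (Fin r) (Fin n) ℕ) :
    List (List ℕ) × List (List ℕ) :=
  (biword A).foldl RSstep ([], [])

/-- The Robinson–Schensted correspondence on permutations: row-insert the word
`w 1, ..., w n`, recording positions. -/
def RS {n : ℕ} (w : Equiv.Perm (Fin n)) : List (List ℕ) × List (List ℕ) :=
  ((List.finRange n).map (fun k => (k.val + 1, (w k).val + 1))).foldl RSstep ([], [])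

/-- The target of RSK: pairs of semistandard tableaux of the same shape, with
entries of the first in `{1,...,n}` and of the second in `{1,...,r}`. -/
def RSKTarget (r n : ℕ) : Set (List (List ℕ) × List (List ℕ)) :=
  {pq | IsSSYT pq.1 ∧ IsSSYT pq.2 ∧ shape pq.1 = shape pq.2 ∧
    EntriesIn pq.1 n ∧ EntriesIn pq.2 r}

/-! Crystal operators via the signature (bracketing) rule. -/

/-- One step of bracket matching: `true` is an unmatched plus pushed on the stack,
`false` is a minus which cancels the most recent unmatched plus if one exists. -/
def sigStep (st : List ℕ × List ℕ) (p : ℕ × Bool) : List ℕ × List ℕ :=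
  if p.2 then (p.1 :: st.1, st.2)
  else
    match st.1 with
    | [] => ([], st.2 ++ [p.1])
    | _ :: ps => (ps, st.2)

/-- Bracket matching: returns (unmatched pluses, newest first; unmatched minuses, oldest first). -/
def matchSig (l : List (ℕ × Bool)) : List ℕ × List ℕ := l.foldl sigStep ([], [])

/-- Position acted upon by the lowering operator `f`. -/
def fIdx (l : List (ℕ × Bool)) : Option ℕ := (matchSig l).1.head?

/-- Position acted upon by the raising operator `e`. -/
def eIdx (l : List (ℕ × Bool)) : Option ℕ := (matchSig l).2.head?

/-- Signature word of a matrix for the `i`-th crystal operator: the columns are the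
tensor factors, column `j` contributing `ε = A (i+1) j` minuses and `φ = A i j` pluses. -/
def matSig {r n : ℕ} (i : ℕ) (hi : i + 1 < r) (A : Matrix (Fin r) (Fin n) ℕ) :
    List (ℕ × Bool) :=
  (List.finRange n).flatMap fun j =>
    List.replicate (A ⟨i+1, hi⟩ j) (j.val, false) ++
      List.replicate (A ⟨i, by omega⟩ j) (j.val, true)

/-- Crystal lowering operator `f_i` on `Mat_{r×n}(ℕ)`: moves one unit from row `i`
to row `i+1` in the selected column (1-based crystal index `i ∈ {1,...,r-1}`,
here 0-based as `i` acting on rows `i, i+1`). -/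
def matF {r n : ℕ} (i : ℕ) (A : Matrix (Fin r) (Fin n) ℕ) :
    Option (Matrix (Fin r) (Fin n) ℕ) :=
  if hi : i + 1 < r then
    (fIdx (matSig i hi A)).map fun jj =>
      Matrix.of fun i' j' =>
        if j'.val = jj then
          if i'.val = i then A i' j' - 1
          else if i'.val = i + 1 then A i' j' + 1
          else A i' j'
        else A i' j'
  else none

/-- Crystal raising operator `e_i` on `Mat_{r×n}(ℕ)`. -/
def matE {r n : ℕ} (i : ℕ) (A : Matrix (Fin r) (Fin n) ℕ) :
    Option (Matrix (Fin r) (Fin n) ℕ) :=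
  if hi : i + 1 < r then
    (eIdx (matSig i hi A)).map fun jj =>
      Matrix.of fun i' j' =>
        if j'.val = jj then
          if i'.val = i then A i' j' + 1
          else if i'.val = i + 1 then A i' j' - 1
          else A i' j'
        else A i' j'
  else none

/-- Cut a word into rows of the given lengths. -/
def reshape : List ℕ → List ℕ → List (List ℕ)
  | [], _ => []
  | l :: ls, w => w.take l :: reshape ls (w.drop l)

/-- Signature word of a tableau for the `i`-th crystal operator (letters `i+1` are
pluses, letters `i+2` are minuses), reading the tableau row by row. -/
def tabSig (i : ℕ) (T : List (List ℕ)) : List (ℕ × Bool) :=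
  (T.flatten.zipIdx.map Prod.swap).filterMap fun p =>
    if p.2 = i + 1 then some (p.1, true)
    else if p.2 = i + 2 then some (p.1, false) else none

/-- Crystal lowering operator `f_i` on semistandard tableaux: changes one entry
`i+1` into `i+2`. -/
def tabF (i : ℕ) (T : List (List ℕ)) : Option (List (List ℕ)) :=
  (fIdx (tabSig i T)).map fun k => reshape (shape T) (T.flatten.set k (i + 2))

/-- Crystal raising operator `e_i` on semistandard tableaux: changes one entry
`i+2` into `i+1`. -/
def tabE (i : ℕ) (T : List (List ℕ)) : Option (List (List ℕ)) :=
  (eIdx (tabSig i T)).map fun k => reshape (shape T) (T.flatten.set k (i + 1))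

/-- Restriction of a tableau: remove all boxes with entry `> m`. -/
def restrict (m : ℕ) (T : List (List ℕ)) : List (List ℕ) :=
  (T.map fun row => row.filter (· ≤ m)).filter (· ≠ [])

end RSKPaper

/-!
Knuth's proof. Insert a lexicographically sorted biword `w` into the first row only, keeping for
every box of that row its pile: the pairs `(label, value)` whose values have occupied the box,
newest first. The first row of `P` lists the pile tops, the first row of `Q` the labels of the
pile bottoms, and the remaining rows are RSK of the bumped word, made of the pairs `(x.1, y.2)`
for `x` directly above `y` in a pile; this word is again sorted.

The piles are the successive layers of minimal elements of `w` for the product order, so swapping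
the two coordinates of `w` reverses and transposes every pile. This exchanges pile tops with
bottom labels and transposes the bumped word, and induction on the length of `w` concludes.
-/

namespace RSKPaper

open List

def LexLE (p q : ℕ × ℕ) : Prop := toLex p ≤ toLex q

lemma lexLE_iff {p q : ℕ × ℕ} : LexLE p q ↔ p.1 < q.1 ∨ p.1 = q.1 ∧ p.2 ≤ q.2 :=
  Prod.Lex.toLex_le_toLex

instance : Trans LexLE LexLE LexLE := ⟨le_trans (α := ℕ ×ₗ ℕ)⟩

instance : Std.Antisymm LexLE := ⟨fun _ _ h h' => toLex.injective (le_antisymm h h')⟩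

-- Piles are never empty; the default `(0, 0)` is fixed by `Prod.swap`, so the lemmas on
-- transposed piles below need no nonemptiness hypothesis.
def pileTop (P : List (ℕ × ℕ)) : ℕ := (P.headD (0, 0)).2

def pileLabel (P : List (ℕ × ℕ)) : ℕ := (P.getLastD (0, 0)).1

def pileBumps : List (ℕ × ℕ) → List (ℕ × ℕ)
  | x :: y :: l => (x.1, y.2) :: pileBumps (y :: l)
  | _ => []

@[simp] lemma pileTop_cons (p : ℕ × ℕ) (P : List (ℕ × ℕ)) : pileTop (p :: P) = p.2 := rfl

lemma pileLabel_cons (p : ℕ × ℕ) {P : List (ℕ × ℕ)} (hP : P ≠ []) :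
    pileLabel (p :: P) = pileLabel P := by
  obtain ⟨x, P, rfl⟩ := List.exists_cons_of_ne_nil hP
  simp [pileLabel]

lemma pileBumps_cons (p : ℕ × ℕ) {P : List (ℕ × ℕ)} (hP : P ≠ []) :
    pileBumps (p :: P) = (p.1, pileTop P) :: pileBumps P := by
  obtain ⟨x, P, rfl⟩ := List.exists_cons_of_ne_nil hP
  rfl

def insertPile : List (List (ℕ × ℕ)) → ℕ × ℕ → List (List (ℕ × ℕ)) × Option ℕ
  | [], p => ([[p]], none)
  | P :: Ps, p =>
      if pileTop P ≤ p.2 then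
        let r := insertPile Ps p
        (P :: r.1, r.2)
      else ((p :: P) :: Ps, some (pileTop P))

def pushPile (Ps : List (List (ℕ × ℕ))) (p : ℕ × ℕ) : List (List (ℕ × ℕ)) :=
  (insertPile Ps p).1

def piles (w : List (ℕ × ℕ)) : List (List (ℕ × ℕ)) := w.foldl pushPile []

def bumpStep (s : List (List (ℕ × ℕ)) × List (ℕ × ℕ)) (p : ℕ × ℕ) :
    List (List (ℕ × ℕ)) × List (ℕ × ℕ) :=
  (pushPile s.1 p, s.2 ++ ((insertPile s.1 p).2.map (p.1, ·)).toList)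

def bumpWord (w : List (ℕ × ℕ)) : List (ℕ × ℕ) := (w.foldl bumpStep ([], [])).2

lemma insertPile_cases (Ps : List (List (ℕ × ℕ))) (p : ℕ × ℕ) :
    (insertPile Ps p = (Ps ++ [[p]], none) ∧ ∀ P ∈ Ps, pileTop P ≤ p.2) ∨
    ∃ A P B, Ps = A ++ P :: B ∧ (∀ Q ∈ A, pileTop Q ≤ p.2) ∧ p.2 < pileTop P ∧
      insertPile Ps p = (A ++ (p :: P) :: B, some (pileTop P)) := by
  induction Ps with
  | nil => simp [insertPile]
  | cons P Ps ih =>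
    by_cases h : pileTop P ≤ p.2
    · rcases ih with ⟨hins, hle⟩ | ⟨A, P', B, rfl, hA, hlt, hins⟩
      · left
        simp_all [insertPile]
      · right
        refine ⟨P :: A, P', B, rfl, ?_, hlt, ?_⟩
        · simp_all
        · simp [insertPile, h, hins]
    · right
      exact ⟨[], P, Ps, rfl, by simp, by omega, by simp [insertPile, h]⟩

lemma pushPile_ne_nil {Ps : List (List (ℕ × ℕ))} (hPs : ∀ P ∈ Ps, P ≠ [])
    (p : ℕ × ℕ) :
    ∀ P ∈ pushPile Ps p, P ≠ [] := by
  rcases insertPile_cases Ps p with ⟨hins, -⟩ | ⟨A, P, B, rfl, -, -, hins⟩ <;>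
    simp only [pushPile, hins] <;> aesop

lemma insRow_map_pileTop (Ps : List (List (ℕ × ℕ))) (p : ℕ × ℕ) :
    insRow p.2 (Ps.map pileTop) = ((pushPile Ps p).map pileTop, (insertPile Ps p).2) := by
  induction Ps with
  | nil => simp [insRow, insertPile, pushPile, pileTop]
  | cons P Ps ih =>
    by_cases h : pileTop P ≤ p.2
    · simp_all [insRow, insertPile, pushPile]
    · simp [insRow, insertPile, pushPile, h]

def addFirstRow (Ps : List (List (ℕ × ℕ))) (R : List (List ℕ) × List (List ℕ)) :
    List (List ℕ) × List (List ℕ) :=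
  (Ps.map pileTop :: R.1, Ps.map pileLabel :: R.2)

lemma rsStep_addFirstRow {Ps : List (List (ℕ × ℕ))} (hPs : ∀ P ∈ Ps, P ≠ [])
    (R : List (List ℕ) × List (List ℕ)) (p : ℕ × ℕ) :
    RSstep (addFirstRow Ps R) p =
      addFirstRow (pushPile Ps p)
        (((insertPile Ps p).2.map (p.1, ·)).toList.foldl RSstep R) := by
  simp only [RSstep, addFirstRow, insPQ, insRow_map_pileTop]
  rcases insertPile_cases Ps p with ⟨hins, -⟩ | ⟨A, P, B, rfl, -, -, hins⟩
  · simp [hins, pushPile, pileLabel]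
  · have hP : P ≠ [] := hPs P (by simp)
    simp [hins, pushPile, pileLabel_cons p hP, RSstep]

lemma foldl_rsStep_addFirstRow (u : List (ℕ × ℕ)) :
    ∀ {Ps : List (List (ℕ × ℕ))}, (∀ P ∈ Ps, P ≠ []) →
      ∀ (acc : List (ℕ × ℕ)) R,
      u.foldl RSstep (addFirstRow Ps (acc.foldl RSstep R)) =
        addFirstRow (u.foldl bumpStep (Ps, acc)).1
          ((u.foldl bumpStep (Ps, acc)).2.foldl RSstep R) := by
  induction u with
  | nil => intros; rfl
  | cons p u ih =>
    intro Ps hPs acc R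
    rw [foldl_cons, rsStep_addFirstRow hPs, ← foldl_append]
    exact ih (pushPile_ne_nil hPs p) _ R

def rskWord (w : List (ℕ × ℕ)) : List (List ℕ) × List (List ℕ) := w.foldl RSstep ([], [])

lemma fst_foldl_bumpStep (u : List (ℕ × ℕ)) :
    ∀ s, (u.foldl bumpStep s).1 = u.foldl pushPile s.1 := by
  induction u with
  | nil => intro; rfl
  | cons p u ih => intro s; exact ih _

lemma rskWord_cons (p : ℕ × ℕ) (u : List (ℕ × ℕ)) :
    rskWord (p :: u) = addFirstRow (piles (p :: u)) (rskWord (bumpWord (p :: u))) := by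
  have h := foldl_rsStep_addFirstRow u (Ps := [[p]]) (by simp) [] ([], [])
  rw [fst_foldl_bumpStep] at h
  exact h

lemma length_foldl_bumpStep_le (u : List (ℕ × ℕ)) :
    ∀ s, (u.foldl bumpStep s).2.length ≤ s.2.length + u.length := by
  induction u with
  | nil => simp
  | cons p u ih =>
    intro s
    refine (ih _).trans ?_
    have := Option.length_toList_le (o := ((insertPile s.1 p).2.map (p.1, ·)))
    simp only [bumpStep, length_append, length_cons]
    omega

lemma length_bumpWord_lt (p : ℕ × ℕ) (u : List (ℕ × ℕ)) :
    (bumpWord (p :: u)).length < (p :: u).length := by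
  have h : (u.foldl bumpStep ([[p]], [])).2.length ≤ u.length := by
    simpa using length_foldl_bumpStep_le u ([[p]], [])
  exact Nat.lt_succ_of_le h

lemma pairwise_le_append_cons_of_le {α : Type*} [Preorder α] {A B : List α} {a x : α}
    (h : (A ++ a :: B).Pairwise (· ≤ ·)) (hA : ∀ y ∈ A, y ≤ x) (hx : x ≤ a) :
    (A ++ x :: B).Pairwise (· ≤ ·) := by
  simp only [pairwise_append, pairwise_cons, mem_cons] at h ⊢
  obtain ⟨hA', ⟨haB, hB⟩, hAaB⟩ := h
  refine ⟨hA', ⟨fun b hb => hx.trans (haB b hb), hB⟩, fun y hy b => ?_⟩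
  rintro (rfl | hb)
  exacts [hA y hy, hAaB y hy b (Or.inr hb)]

structure BumpInvariant (last : ℕ × ℕ) (s : List (List (ℕ × ℕ)) × List (ℕ × ℕ)) :
    Prop where
  piles_ne_nil : ∀ P ∈ s.1, P ≠ []
  tops_sorted : (s.1.map pileTop).Pairwise (· ≤ ·)
  isChain : s.2.IsChain LexLE
  perm : s.2 ~ s.1.flatMap pileBumps
  -- the last bumped pair lies lexicographically below anything the next insertion can bump
  getLast_le : ∀ q ∈ s.2.getLast?, q.1 ≤ last.1 ∧
    (q.1 = last.1 → ∀ t ∈ s.1.map pileTop, last.2 < t → q.2 ≤ t)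

namespace BumpInvariant

variable {p₀ p : ℕ × ℕ} {acc : List (ℕ × ℕ)}

lemma newPile {Ps : List (List (ℕ × ℕ))} (h : BumpInvariant p₀ (Ps, acc)) (hp : LexLE p₀ p)
    (hle : ∀ P ∈ Ps, pileTop P ≤ p.2) : BumpInvariant p (Ps ++ [[p]], acc) where
  piles_ne_nil := by simpa [or_imp, forall_and] using h.piles_ne_nil
  tops_sorted := by
    simpa [pairwise_append, h.tops_sorted] using hle
  isChain := h.isChain
  perm := by simpa [pileBumps] using h.perm
  getLast_le q hq := by
    obtain ⟨hq₀, hq₀'⟩ := h.getLast_le q hq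
    have := lexLE_iff.1 hp
    refine ⟨by omega, fun hq₁ t ht hpt => ?_⟩
    simp only [map_append, map_cons, map_nil, mem_append, mem_singleton] at ht
    rcases ht with ht | rfl
    · exact hq₀' (by omega) t ht (by omega)
    · simp at hpt

lemma bump {A B : List (List (ℕ × ℕ))} {P : List (ℕ × ℕ)}
    (h : BumpInvariant p₀ (A ++ P :: B, acc)) (hp : LexLE p₀ p)
    (hA : ∀ Q ∈ A, pileTop Q ≤ p.2) (hlt : p.2 < pileTop P) :
    BumpInvariant p (A ++ (p :: P) :: B, acc ++ [(p.1, pileTop P)]) where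
  piles_ne_nil := by
    have := h.piles_ne_nil
    simp only [mem_append, mem_cons] at this ⊢
    aesop
  tops_sorted := by
    simpa using pairwise_le_append_cons_of_le (by simpa using h.tops_sorted) (by simpa using hA)
      hlt.le
  isChain := by
    refine h.isChain.append (isChain_singleton _) fun q hq y hy => ?_
    obtain rfl : (p.1, pileTop P) = y := by simpa using hy
    obtain ⟨hq₀, hq₀'⟩ := h.getLast_le q hq
    have := lexLE_iff.1 hp
    refine lexLE_iff.2 <|
      (Nat.lt_or_eq_of_le (hq₀.trans ?_)).imp_right fun hq₁ => ⟨hq₁, ?_⟩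
    · omega
    · exact hq₀' (by omega) _ (by simp) (by omega)
  perm := by
    have := h.perm
    simp only [flatMap_append, flatMap_cons, pileBumps_cons p (h.piles_ne_nil P (by simp))]
      at this ⊢
    exact (perm_append_singleton _ _).trans ((this.cons _).trans perm_middle.symm)
  getLast_le := by
    simp only [getLast?_concat, Option.mem_def, Option.some.injEq]
    rintro q rfl
    refine ⟨le_rfl, fun _ t ht hpt => ?_⟩
    have hPB := h.tops_sorted
    simp only [map_append, map_cons, pairwise_append, pairwise_cons, mem_map] at hPB
    simp only [map_append, map_cons, mem_append, mem_cons, mem_map] at ht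
    rcases ht with ⟨Q, hQ, rfl⟩ | rfl | ⟨R, hR, rfl⟩
    · exact absurd (hA Q hQ) (by simpa using hpt)
    · simp at hpt
    · exact hPB.2.1.1 _ ⟨R, hR, rfl⟩

lemma bumpStep {s : List (List (ℕ × ℕ)) × List (ℕ × ℕ)} (h : BumpInvariant p₀ s)
    (hp : LexLE p₀ p) : BumpInvariant p (bumpStep s p) := by
  obtain ⟨Ps, acc⟩ := s
  rcases insertPile_cases Ps p with ⟨hins, hle⟩ | ⟨A, P, B, rfl, hA, hlt, hins⟩
  · simpa [RSKPaper.bumpStep, pushPile, hins] using h.newPile hp hle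
  · simpa [RSKPaper.bumpStep, pushPile, hins] using h.bump hp hA hlt

end BumpInvariant

lemma exists_bumpInvariant_foldl (u : List (ℕ × ℕ)) :
    ∀ {p₀ : ℕ × ℕ} {s}, BumpInvariant p₀ s → (p₀ :: u).Pairwise LexLE →
      ∃ q, BumpInvariant q (u.foldl bumpStep s) := by
  induction u with
  | nil => exact fun h _ => ⟨_, h⟩
  | cons p u ih =>
    intro p₀ s h hu
    rw [pairwise_cons] at hu
    exact ih (h.bumpStep (hu.1 p mem_cons_self)) hu.2

lemma exists_bumpInvariant {w : List (ℕ × ℕ)} (hw : w.Pairwise LexLE) :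
    ∃ q, BumpInvariant q (w.foldl bumpStep ([], [])) := by
  rcases w with _ | ⟨p, u⟩
  · exact ⟨(0, 0), by constructor <;> simp⟩
  · show ∃ q, BumpInvariant q (u.foldl bumpStep ([[p]], []))
    exact exists_bumpInvariant_foldl u (p₀ := p) (by constructor <;> simp [pileBumps]) hw

lemma bumpWord_sorted {w : List (ℕ × ℕ)} (hw : w.Pairwise LexLE) :
    (bumpWord w).Pairwise LexLE :=
  isChain_iff_pairwise.1 (exists_bumpInvariant hw).choose_spec.isChain

lemma bumpWord_perm {w : List (ℕ × ℕ)} (hw : w.Pairwise LexLE) :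
    bumpWord w ~ (piles w).flatMap pileBumps := by
  have h := (exists_bumpInvariant hw).choose_spec.perm
  rwa [fst_foldl_bumpStep] at h

def records : ℕ∞ → List (ℕ × ℕ) → List (ℕ × ℕ)
  | _, [] => []
  | b, p :: u => if (p.2 : ℕ∞) < b then p :: records p.2 u else records b u

def nonRecords : ℕ∞ → List (ℕ × ℕ) → List (ℕ × ℕ)
  | _, [] => []
  | b, p :: u => if (p.2 : ℕ∞) < b then nonRecords p.2 u else p :: nonRecords b u

lemma foldl_pushPile_cons (u : List (ℕ × ℕ)) : ∀ (P : List (ℕ × ℕ)) Ps,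
    u.foldl pushPile (P :: Ps) =
      ((records (pileTop P) u).reverse ++ P) :: (nonRecords (pileTop P) u).foldl pushPile Ps := by
  induction u with
  | nil => intros; simp [records, nonRecords]
  | cons p u ih =>
    intro P Ps
    by_cases h : p.2 < pileTop P
    · have : pushPile (P :: Ps) p = (p :: P) :: Ps := by
        simp [pushPile, insertPile, not_le.2 h]
      simp [records, nonRecords, h, this, ih]
    · have : pushPile (P :: Ps) p = P :: pushPile Ps p := by
        simp [pushPile, insertPile, not_lt.1 h]
      simp [records, nonRecords, h, this, ih]

lemma piles_cons (p : ℕ × ℕ) (u : List (ℕ × ℕ)) :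
    piles (p :: u) = (records ⊤ (p :: u)).reverse :: piles (nonRecords ⊤ (p :: u)) := by
  show u.foldl pushPile [[p]] = _
  simpa [records, nonRecords, piles] using foldl_pushPile_cons u [p] []

lemma records_sublist (b : ℕ∞) (u : List (ℕ × ℕ)) : records b u <+ u := by
  induction u generalizing b with
  | nil => exact Sublist.slnil
  | cons q u ih =>
    unfold records
    split_ifs
    exacts [(ih _).cons_cons q, (ih b).cons q]

lemma nonRecords_sublist (b : ℕ∞) (u : List (ℕ × ℕ)) : nonRecords b u <+ u := by
  induction u generalizing b with
  | nil => exact Sublist.slnil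
  | cons q u ih =>
    unfold nonRecords
    split_ifs
    exacts [(ih _).cons q, (ih b).cons_cons q]

lemma records_append_nonRecords_perm (b : ℕ∞) (u : List (ℕ × ℕ)) :
    records b u ++ nonRecords b u ~ u := by
  induction u generalizing b with
  | nil => exact Perm.nil
  | cons q u ih =>
    unfold records nonRecords
    split_ifs
    exacts [(ih _).cons q, perm_middle.trans ((ih b).cons q)]

lemma minimal_mem_cons_self {q : ℕ × ℕ} {u : List (ℕ × ℕ)} (hq : ∀ y ∈ u, LexLE q y) :
    Minimal (· ∈ q :: u) q := by
  refine ⟨mem_cons_self, fun y hy hyq => ?_⟩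
  rcases mem_cons.1 hy with rfl | hy
  · exact le_rfl
  · have := lexLE_iff.1 (hq y hy)
    rw [Prod.le_def] at hyq ⊢
    omega

lemma minimal_mem_cons_iff {q x : ℕ × ℕ} {u : List (ℕ × ℕ)} (hq : ∀ y ∈ u, LexLE q y)
    (hx : x ≠ q) : Minimal (· ∈ q :: u) x ↔ Minimal (· ∈ u) x ∧ x.2 < q.2 := by
  constructor
  · rintro ⟨hxu, hmin⟩
    have hxu : x ∈ u := (mem_cons.1 hxu).resolve_left hx
    refine ⟨⟨hxu, fun y hy => hmin (mem_cons_of_mem q hy)⟩, ?_⟩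
    by_contra! hqx
    have := lexLE_iff.1 (hq x hxu)
    have hxq := hmin mem_cons_self (Prod.le_def.2 ⟨by omega, hqx⟩)
    exact hx (le_antisymm hxq (Prod.le_def.2 ⟨by omega, hqx⟩))
  · rintro ⟨⟨hxu, hmin⟩, hxq⟩
    refine ⟨mem_cons_of_mem q hxu, fun y hy hyx => ?_⟩
    rcases mem_cons.1 hy with rfl | hy
    · exact absurd (Prod.le_def.1 hyx).2 (by omega)
    · exact hmin hy hyx

lemma mem_records_iff {u : List (ℕ × ℕ)} (hu : u.Pairwise LexLE) {b : ℕ∞}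
    {x : ℕ × ℕ} : x ∈ records b u ↔ (x.2 : ℕ∞) < b ∧ Minimal (· ∈ u) x := by
  induction u generalizing b with
  | nil => simp [records, Minimal]
  | cons q u ih =>
    obtain ⟨hq, hu'⟩ := pairwise_cons.1 hu
    by_cases hxq : x = q
    · subst hxq
      by_cases h : (x.2 : ℕ∞) < b
      · simp only [records, if_pos h, mem_cons_self, true_iff]
        exact ⟨h, minimal_mem_cons_self hq⟩
      · rw [records, if_neg h, ih hu']
        simp [h]
    · rw [minimal_mem_cons_iff hq hxq]
      by_cases h : (q.2 : ℕ∞) < b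
      · simp only [records, h, if_true, mem_cons, hxq, false_or, ih hu', Nat.cast_lt]
        constructor
        · rintro ⟨hxq', hmin⟩
          exact ⟨(Nat.cast_lt.2 hxq').trans h, hmin, hxq'⟩
        · rintro ⟨-, hmin, hxq'⟩
          exact ⟨hxq', hmin⟩
      · simp only [records, h, if_false, ih hu']
        constructor
        · rintro ⟨hxb, hmin⟩
          exact ⟨hxb, hmin, Nat.cast_lt.1 (hxb.trans_le (not_lt.1 h))⟩
        · rintro ⟨hxb, hmin, -⟩
          exact ⟨hxb, hmin⟩

lemma nonRecords_sorted {u : List (ℕ × ℕ)} (hu : u.Pairwise LexLE) {b : ℕ∞} :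
    (nonRecords b u).Pairwise LexLE :=
  hu.sublist (nonRecords_sublist b u)

lemma records_pairwise {u : List (ℕ × ℕ)} (hu : u.Pairwise LexLE) (b : ℕ∞) :
    (records b u).Pairwise fun x y => x.1 < y.1 ∧ y.2 < x.2 := by
  induction u generalizing b with
  | nil => exact Pairwise.nil
  | cons q u ih =>
    obtain ⟨hq, hu'⟩ := pairwise_cons.1 hu
    unfold records
    split_ifs
    · refine pairwise_cons.2 ⟨fun y hy => ?_, ih hu' _⟩
      obtain ⟨hyq, hmin⟩ := (mem_records_iff hu').1 hy
      have := lexLE_iff.1 (hq y hmin.prop)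
      have := Nat.cast_lt.1 hyq
      omega
    · exact ih hu' b

lemma mem_map_swap_iff {α β : Type*} {l : List (α × β)} {x : β × α} :
    x ∈ l.map Prod.swap ↔ x.swap ∈ l :=
  mem_map_swap x.2 x.1 l

lemma minimal_mem_iff_of_perm_map_swap {v w : List (ℕ × ℕ)} (hperm : v ~ w.map Prod.swap)
    {x : ℕ × ℕ} : Minimal (· ∈ v) x ↔ Minimal (· ∈ w) x.swap := by
  simp_rw [hperm.mem_iff, mem_map_swap_iff]
  exact ((OrderIso.prodComm (α := ℕ) (β := ℕ)).toOrderEmbedding.minimal_apply_mem_iff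
    (t := {z | z ∈ w}) fun z _ => ⟨z.swap, Prod.swap_swap z⟩).symm

lemma records_top_of_perm_map_swap {w v : List (ℕ × ℕ)} (hw : w.Pairwise LexLE)
    (hv : v.Pairwise LexLE) (hperm : v ~ w.map Prod.swap) :
    records ⊤ v = ((records ⊤ w).map Prod.swap).reverse := by
  have hv' := records_pairwise hv ⊤
  have hw' : ((records ⊤ w).map Prod.swap).reverse.Pairwise
      fun x y => x.1 < y.1 ∧ y.2 < x.2 := by
    rw [pairwise_reverse, pairwise_map]
    exact (records_pairwise hw ⊤).imp fun h => ⟨h.2, h.1⟩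
  refine Perm.eq_of_pairwise' (r := LexLE) (hv'.imp fun h => lexLE_iff.2 (Or.inl h.1))
    (hw'.imp fun h => lexLE_iff.2 (Or.inl h.1)) ?_
  refine (perm_ext_iff_of_nodup (hv'.imp ?_) (hw'.imp ?_)).2 fun x => ?_
  · rintro x _ h rfl; omega
  · rintro x _ h rfl; omega
  simp [mem_records_iff hv, mem_records_iff hw, mem_map_swap_iff,
    minimal_mem_iff_of_perm_map_swap hperm]

lemma nonRecords_top_perm_map_swap {w v : List (ℕ × ℕ)} (hw : w.Pairwise LexLE)
    (hv : v.Pairwise LexLE) (hperm : v ~ w.map Prod.swap) :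
    nonRecords ⊤ v ~ (nonRecords ⊤ w).map Prod.swap := by
  have h : records ⊤ v ++ nonRecords ⊤ v ~
      (records ⊤ w).map Prod.swap ++ (nonRecords ⊤ w).map Prod.swap := by
    rw [← map_append]
    exact (records_append_nonRecords_perm ⊤ v).trans
      (hperm.trans ((records_append_nonRecords_perm ⊤ w).map _).symm)
  rw [records_top_of_perm_map_swap hw hv hperm] at h
  exact (perm_append_left_iff _).1 ((reverse_perm _).symm.append_right _ |>.trans h)

lemma length_nonRecords_top_lt (p : ℕ × ℕ) (u : List (ℕ × ℕ)) :
    (nonRecords ⊤ (p :: u)).length < (p :: u).length := by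
  simpa [nonRecords] using (nonRecords_sublist p.2 u).length_le

lemma piles_of_perm_map_swap {w v : List (ℕ × ℕ)} (hw : w.Pairwise LexLE)
    (hv : v.Pairwise LexLE) (hperm : v ~ w.map Prod.swap) :
    piles v = (piles w).map fun P => (P.map Prod.swap).reverse := by
  induction hn : w.length using Nat.strong_induction_on generalizing w v with
  | _ n ih =>
  rcases w with _ | ⟨p, u⟩
  · rw [map_nil, perm_nil] at hperm
    subst hperm
    rfl
  rcases v with _ | ⟨p', u'⟩
  · exact absurd hperm.length_eq (by simp)
  rw [piles_cons, piles_cons, records_top_of_perm_map_swap hw hv hperm, map_cons,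
    ih _ (hn ▸ length_nonRecords_top_lt p u) (nonRecords_sorted hw) (nonRecords_sorted hv)
      (nonRecords_top_perm_map_swap hw hv hperm) rfl]
  simp [map_reverse]

lemma pileTop_reverse_map_swap (P : List (ℕ × ℕ)) :
    pileTop (P.map Prod.swap).reverse = pileLabel P := by
  simp only [pileTop, pileLabel, headD_eq_head?_getD, getLastD_eq_getLast?, head?_reverse,
    getLast?_map]
  cases P.getLast? <;> rfl

lemma pileLabel_reverse_map_swap (P : List (ℕ × ℕ)) :
    pileLabel (P.map Prod.swap).reverse = pileTop P := by
  simp only [pileTop, pileLabel, headD_eq_head?_getD, getLastD_eq_getLast?, getLast?_reverse,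
    head?_map]
  cases P.head? <;> rfl

lemma pileBumps_append_singleton {l : List (ℕ × ℕ)} (hl : l ≠ []) (a : ℕ × ℕ) :
    pileBumps (l ++ [a]) = pileBumps l ++ [(pileLabel l, a.2)] := by
  induction l with
  | nil => exact absurd rfl hl
  | cons x l ih =>
    rcases eq_or_ne l [] with rfl | hl'
    · rfl
    · rw [cons_append, pileBumps_cons x (by simp), pileBumps_cons x hl', ih hl',
        pileLabel_cons x hl']
      obtain ⟨y, l, rfl⟩ := exists_cons_of_ne_nil hl'
      rfl

lemma pileBumps_reverse_map_swap (P : List (ℕ × ℕ)) :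
    pileBumps (P.map Prod.swap).reverse = ((pileBumps P).map Prod.swap).reverse := by
  induction P with
  | nil => rfl
  | cons p P ih =>
    rcases eq_or_ne P [] with rfl | hP
    · rfl
    · rw [map_cons, reverse_cons, pileBumps_append_singleton (by simpa using hP),
        pileLabel_reverse_map_swap, ih, pileBumps_cons p hP]
      simp

lemma addFirstRow_reverse_map_swap (Ps : List (List (ℕ × ℕ)))
    (R : List (List ℕ) × List (List ℕ)) :
    addFirstRow (Ps.map fun P => (P.map Prod.swap).reverse) R.swap = (addFirstRow Ps R).swap := by
  simp [addFirstRow, Function.comp_def, pileTop_reverse_map_swap, pileLabel_reverse_map_swap]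

lemma bumpWord_perm_map_swap {w v : List (ℕ × ℕ)} (hw : w.Pairwise LexLE)
    (hv : v.Pairwise LexLE) (hperm : v ~ w.map Prod.swap) :
    bumpWord v ~ (bumpWord w).map Prod.swap := by
  refine (bumpWord_perm hv).trans ?_
  rw [piles_of_perm_map_swap hw hv hperm, flatMap_map]
  refine (Perm.flatMap_left _ fun P _ => ?_).trans
    (map_flatMap .. ▸ ((bumpWord_perm hw).map Prod.swap).symm)
  rw [pileBumps_reverse_map_swap]
  exact reverse_perm _

theorem rskWord_of_perm_map_swap {w v : List (ℕ × ℕ)} (hw : w.Pairwise LexLE)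
    (hv : v.Pairwise LexLE) (hperm : v ~ w.map Prod.swap) :
    rskWord v = (rskWord w).swap := by
  induction hn : w.length using Nat.strong_induction_on generalizing w v with
  | _ n ih =>
  rcases w with _ | ⟨p, u⟩
  · rw [map_nil, perm_nil] at hperm
    subst hperm
    rfl
  rcases v with _ | ⟨p', u'⟩
  · exact absurd hperm.length_eq (by simp)
  rw [rskWord_cons, rskWord_cons, piles_of_perm_map_swap hw hv hperm,
    ih _ (hn ▸ length_bumpWord_lt p u) (bumpWord_sorted hw) (bumpWord_sorted hv)
      (bumpWord_perm_map_swap hw hv hperm) rfl, addFirstRow_reverse_map_swap]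

lemma biword_sorted {r n : ℕ} (A : Matrix (Fin r) (Fin n) ℕ) : (biword A).Pairwise LexLE := by
  simp only [biword, pairwise_flatMap, pairwise_replicate, mem_flatMap, mem_replicate]
  refine ⟨fun i _ => ⟨fun j _ => Or.inr (le_refl (α := ℕ ×ₗ ℕ) _), ?_⟩, ?_⟩
  · refine (pairwise_lt_finRange n).imp fun hj x hx y hy => ?_
    rw [hx.2, hy.2]
    exact lexLE_iff.2 (Or.inr ⟨rfl, by simpa using hj.le⟩)
  · refine (pairwise_lt_finRange r).imp fun hi x ⟨_, _, hx⟩ y ⟨_, _, hy⟩ => ?_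
    rw [hx.2, hy.2]
    exact lexLE_iff.2 (Or.inl (by simpa using hi))

lemma flatMap_comm_perm {α β γ : Type*} (l₁ : List α) (l₂ : List β)
    (f : α → β → List γ) :
    (l₁.flatMap fun a => l₂.flatMap (f a)) ~
      l₂.flatMap fun b => l₁.flatMap fun a => f a b := by
  induction l₁ with
  | nil => simp
  | cons a l₁ ih =>
    rw [flatMap_cons]
    exact (ih.append_left _).trans (flatMap_append_perm l₂ (f a) _)

lemma biword_transpose_perm {r n : ℕ} (A : Matrix (Fin r) (Fin n) ℕ) :
    biword A.transpose ~ (biword A).map Prod.swap := by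
  simp only [biword, map_flatMap, map_replicate, Matrix.transpose_apply, Prod.swap_prod_mk]
  exact flatMap_comm_perm _ _ _ |>.symm

/-- For every matrix `A` with nonnegative integer entries,
`RSK Aᵀ = (Q A, P A)`: transposing the matrix swaps the insertion and recording tableaux. -/
theorem rsk_transpose (r n : ℕ) (A : Matrix (Fin r) (Fin n) ℕ) :
    RSK A.transpose = ((RSK A).2, (RSK A).1) :=
  rskWord_of_perm_map_swap (biword_sorted A) (biword_sorted A.transpose)
    (biword_transpose_perm A)

end RSKPaper
end

section
/- For permutations w of {1,...,n}, if P(w) denotes the insertion tableau of the Robinson-Schensted correspondence, then P(w^{-1}) = Q(w), where Q(w) is the recording tableau. -/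
namespace RSKPaper

/-!
Fomin's growth diagrams. For an injective word `v` let `T v i j` (`growthTab v i j` below) be
the insertion tableau of the subword of `v 0, …, v (j-1)` formed by the letters `≤ i`. Because
row insertion commutes with deleting the entries `> i`, the shape of `T v (i+1) (j+1)` is a
function of the shapes of `T v i j`, `T v i (j+1)`, `T v (i+1) j` and of whether `v j = i + 1`,
and this local rule is symmetric in its two middle arguments. Since `v j = i + 1 ↔ v⁻¹ i = j + 1`,
induction on `i + j` gives `shape (T v i j) = shape (T v⁻¹ j i)`. Now `P(w⁻¹)` restricted to the
entries `≤ j` is `T w⁻¹ j n`, whose shape is that of `T w n j`, the insertion tableau after `j`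
steps of RS on `w`. So at every step RS on `w` records `j + 1` in the box that `j + 1` occupies
in `P(w⁻¹)`, and `Q(w) = P(w⁻¹)`.
-/

/-! ### Shapes -/

/-- Adds a box at the end of row `d` of a shape, starting a new row if `d = l.length`. -/
def addBox : List ℕ → ℕ → List ℕ
  | [], _ => [1]
  | a :: l, 0 => (a + 1) :: l
  | a :: l, d + 1 => a :: addBox l d

def appendToRow : List (List ℕ) → ℕ → ℕ → List (List ℕ)
  | [], _, v => [[v]]
  | r :: rs, 0, v => (r ++ [v]) :: rs
  | r :: rs, d + 1, v => r :: appendToRow rs d v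

def firstDiff : List ℕ → List ℕ → ℕ
  | a :: as, b :: bs => if a = b then firstDiff as bs + 1 else 0
  | _, _ => 0

def rowwiseMax : List ℕ → List ℕ → List ℕ
  | [], b => b
  | a :: as, [] => a :: as
  | a :: as, b :: bs => max a b :: rowwiseMax as bs

@[simp] lemma shape_cons (r : List ℕ) (T : List (List ℕ)) :
    shape (r :: T) = r.length :: shape T := rfl

@[simp] lemma length_shape (T : List (List ℕ)) : (shape T).length = T.length :=
  List.length_map _

lemma shape_appendToRow (T : List (List ℕ)) (d v : ℕ) :
    shape (appendToRow T d v) = addBox (shape T) d := by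
  induction T generalizing d with
  | nil => rfl
  | cons r rs ih =>
    cases d with
    | zero => simp [appendToRow, addBox]
    | succ d => simp [appendToRow, addBox, ih]

lemma addBox_ne {l : List ℕ} {d : ℕ} (h : d ≤ l.length) : addBox l d ≠ l := by
  induction l generalizing d with
  | nil => simp [addBox]
  | cons a l ih =>
    cases d with
    | zero => simp [addBox]
    | succ d => simpa [addBox] using ih (by simpa using h)

lemma eq_of_addBox_eq {l : List ℕ} {d₁ d₂ : ℕ} (h₁ : d₁ ≤ l.length) (h₂ : d₂ ≤ l.length)
    (h : addBox l d₁ = addBox l d₂) : d₁ = d₂ := by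
  induction l generalizing d₁ d₂ with
  | nil => simp at h₁ h₂; omega
  | cons a l ih =>
    cases d₁ <;> cases d₂ <;> simp only [addBox, List.cons.injEq] at h
    · rfl
    · omega
    · omega
    · simp only [List.length_cons, Nat.add_le_add_iff_right] at h₁ h₂
      rw [ih h₁ h₂ h.2]

lemma addBox_comm {l : List ℕ} {d₁ d₂ : ℕ} (h₁ : d₁ ≤ l.length) (h₂ : d₂ ≤ l.length) :
    addBox (addBox l d₁) d₂ = addBox (addBox l d₂) d₁ := by
  induction l generalizing d₁ d₂ with
  | nil => simp at h₁ h₂; subst h₁ h₂; rfl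
  | cons a l ih =>
    cases d₁ <;> cases d₂ <;> simp_all [addBox]

lemma rowwiseMax_self (l : List ℕ) : rowwiseMax l l = l := by
  induction l with
  | nil => rfl
  | cons a l ih => simp [rowwiseMax, ih]

lemma rowwiseMax_comm (l₁ l₂ : List ℕ) : rowwiseMax l₁ l₂ = rowwiseMax l₂ l₁ := by
  induction l₁ generalizing l₂ with
  | nil => cases l₂ <;> rfl
  | cons a as ih => cases l₂ <;> simp [rowwiseMax, ih, Nat.max_comm]

lemma rowwiseMax_addBox_self {l : List ℕ} {d : ℕ} (h : d ≤ l.length) :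
    rowwiseMax l (addBox l d) = addBox l d := by
  induction l generalizing d with
  | nil => simp at h; subst h; rfl
  | cons a l ih => cases d <;> simp_all [addBox, rowwiseMax, rowwiseMax_self]

lemma rowwiseMax_addBox_addBox {l : List ℕ} {d₁ d₂ : ℕ} (hne : d₁ ≠ d₂)
    (h₁ : d₁ ≤ l.length) (h₂ : d₂ ≤ l.length) :
    rowwiseMax (addBox l d₁) (addBox l d₂) = addBox (addBox l d₁) d₂ := by
  induction l generalizing d₁ d₂ with
  | nil => simp at h₁ h₂; omega
  | cons a l ih =>
    cases d₁ <;> cases d₂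
    · omega
    · simp_all [addBox, rowwiseMax, rowwiseMax_addBox_self]
    · rw [rowwiseMax_comm]
      simp_all [addBox, rowwiseMax, rowwiseMax_addBox_self]
    · simp_all [addBox, rowwiseMax]

lemma firstDiff_addBox {l : List ℕ} {d : ℕ} (h : d ≤ l.length) :
    firstDiff l (addBox l d) = d := by
  induction l generalizing d with
  | nil => simp at h; subst h; rfl
  | cons a l ih => cases d <;> simp_all [addBox, firstDiff]

/-! ### Schensted insertion -/

lemma getD_mem_of_lt (l : List ℕ) {k : ℕ} (h : k < l.length) : l.getD k 0 ∈ l := by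
  rw [List.getD_eq_getElem l 0 h]; exact List.getElem_mem h

lemma getD_set_of_lt {l : List ℕ} {i k a : ℕ} (h : k < l.length) :
    (l.set i a).getD k 0 = if i = k then a else l.getD k 0 := by
  rw [List.getD_eq_getElem _ _ (by simpa using h), List.getElem_set,
    List.getD_eq_getElem _ _ h]

lemma getD_lt_getD_of_pairwise {r : List ℕ} (hs : r.Pairwise (· < ·)) {k₁ k₂ : ℕ}
    (h1 : k₁ < k₂) (h2 : k₂ < r.length) : r.getD k₁ 0 < r.getD k₂ 0 := by
  rw [List.getD_eq_getElem _ _ (by omega), List.getD_eq_getElem _ _ h2]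
  exact List.pairwise_iff_getElem.mp hs k₁ k₂ (by omega) h2 h1

/-- The column at which `x` enters the row `r` under Schensted insertion. -/
def bumpPos (x : ℕ) (r : List ℕ) : ℕ := (r.takeWhile (· ≤ x)).length

lemma bumpPos_cons (x a : ℕ) (l : List ℕ) :
    bumpPos x (a :: l) = if a ≤ x then bumpPos x l + 1 else 0 := by
  by_cases h : a ≤ x <;> simp [bumpPos, h]

lemma insRow_cons (x a : ℕ) (as : List ℕ) :
    insRow x (a :: as) =
      if a ≤ x then (a :: (insRow x as).1, (insRow x as).2) else (x :: as, some a) := by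
  by_cases h : a ≤ x <;> simp [insRow, h]

lemma insRow_cases (x : ℕ) (r : List ℕ) :
    (bumpPos x r < r.length ∧
       insRow x r = (r.set (bumpPos x r) x, some (r.getD (bumpPos x r) 0)) ∧
       x < r.getD (bumpPos x r) 0 ∧ (∀ k < bumpPos x r, r.getD k 0 ≤ x)) ∨
    (bumpPos x r = r.length ∧ insRow x r = (r ++ [x], none) ∧ ∀ a ∈ r, a ≤ x) := by
  induction r with
  | nil => right; simp [bumpPos, insRow]
  | cons a as ih =>
    by_cases hax : a ≤ x
    · have hb : bumpPos x (a :: as) = bumpPos x as + 1 := by rw [bumpPos_cons, if_pos hax]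
      rcases ih with ⟨h1, h2, h3, h4⟩ | ⟨h1, h2, h3⟩
      · left
        refine ⟨by simp [hb]; omega, by simp [insRow, hax, h2, hb], by simpa [hb] using h3, ?_⟩
        intro k hk
        cases k with
        | zero => simpa using hax
        | succ k => simpa using h4 k (by omega)
      · right
        refine ⟨by simp [hb, h1], by simp [insRow, hax, h2], ?_⟩
        simpa [hax] using h3
    · left
      have hb : bumpPos x (a :: as) = 0 := by rw [bumpPos_cons, if_neg hax]
      exact ⟨by simp [hb], by simp [insRow, hax, hb], by simpa [hb] using hax, by simp [hb]⟩

lemma insRow_eq_none {x : ℕ} {r r' : List ℕ} (h : insRow x r = (r', none)) :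
    r' = r ++ [x] ∧ ∀ a ∈ r, a ≤ x := by
  rcases insRow_cases x r with ⟨_, h2, _, _⟩ | ⟨_, h2, h3⟩ <;> rw [h] at h2
  · simp at h2
  · exact ⟨(Prod.mk.inj h2).1, h3⟩

lemma insRow_eq_some {x : ℕ} {r r' : List ℕ} {b : ℕ} (h : insRow x r = (r', some b)) :
    bumpPos x r < r.length ∧ r' = r.set (bumpPos x r) x ∧ b = r.getD (bumpPos x r) 0 ∧
      x < b ∧ (∀ k < bumpPos x r, r.getD k 0 ≤ x) := by
  rcases insRow_cases x r with ⟨h1, h2, h3, h4⟩ | ⟨_, h2, _⟩ <;> rw [h] at h2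
  · simp only [Prod.mk.injEq, Option.some.injEq] at h2
    exact ⟨h1, h2.1, h2.2, h2.2 ▸ h3, h4⟩
  · simp at h2

lemma insRow_of_forall_le {x : ℕ} {r : List ℕ} (h : ∀ a ∈ r, a ≤ x) :
    insRow x r = (r ++ [x], none) := by
  rcases insRow_cases x r with ⟨h1, _, h3, _⟩ | ⟨_, h2, _⟩
  · exact absurd (h _ (getD_mem_of_lt r h1)) (by omega)
  · exact h2

lemma insRow_append_singleton_of_forall_le {x v : ℕ} {r : List ℕ} (hall : ∀ a ∈ r, a ≤ x)
    (hx : x < v) : insRow x (r ++ [v]) = (r ++ [x], some v) := by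
  induction r with
  | nil => simp [insRow, Nat.not_le.mpr hx]
  | cons a as ih =>
    simp only [List.mem_cons, forall_eq_or_imp] at hall
    simp [insRow_cons, hall.1, ih hall.2]

lemma insRow_append_singleton_of_eq_some {x v b : ℕ} {r r' : List ℕ}
    (h : insRow x r = (r', some b)) : insRow x (r ++ [v]) = (r' ++ [v], some b) := by
  induction r generalizing r' with
  | nil => simp [insRow] at h
  | cons a as ih =>
    rw [insRow_cons] at h
    by_cases ha : a ≤ x
    · simp only [if_pos ha, Prod.mk.injEq] at h
      obtain ⟨rfl, h2⟩ := h
      rw [List.cons_append, insRow_cons, if_pos ha, ih (Prod.ext rfl h2)]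
      rfl
    · simp only [if_neg ha, Prod.mk.injEq, Option.some.injEq] at h
      obtain ⟨rfl, rfl⟩ := h
      rw [List.cons_append, insRow_cons, if_neg ha]
      rfl

lemma pairwise_lt_set {r : List ℕ} {p x : ℕ} (hs : r.Pairwise (· < ·))
    (hlt : ∀ k < p, r.getD k 0 < x) (hgt : x < r.getD p 0) :
    (r.set p x).Pairwise (· < ·) := by
  rw [List.pairwise_iff_getElem] at hs ⊢
  intro i j hi hj hij
  simp only [List.length_set] at hi hj
  have hlt' := hlt i
  have hgt' : p < j → x < r.getD j 0 := fun h =>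
    hgt.trans (getD_lt_getD_of_pairwise (List.pairwise_iff_getElem.mpr hs) h hj)
  rw [List.getD_eq_getElem _ _ hi] at hlt'
  rw [List.getD_eq_getElem _ _ hj] at hgt'
  rw [List.getElem_set, List.getElem_set]
  have := hs i j hi hj hij
  split_ifs <;> omega

lemma set_append_getD_perm {l : List ℕ} {p : ℕ} (x : ℕ) (h : p < l.length) :
    (l.set p x ++ [l.getD p 0]).Perm (x :: l) := by
  induction l generalizing p with
  | nil => simp at h
  | cons a as ih =>
    cases p with
    | zero => exact ((List.perm_append_singleton a as).cons x)
    | succ p => exact ((ih (by simpa using h)).cons a).trans (List.Perm.swap x a as)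

lemma insertT_cons (r : List ℕ) (rs : List (List ℕ)) (x : ℕ) :
    insertT (r :: rs) x = (insRow x r).1 ::
      (match (insRow x r).2 with | none => rs | some b => insertT rs b) := by
  rw [insertT]
  rcases insRow x r with ⟨r', _ | b⟩ <;> rfl

lemma insertT_cons_of_eq_none {x : ℕ} {r r' : List ℕ} (rs : List (List ℕ))
    (h : insRow x r = (r', none)) : insertT (r :: rs) x = r' :: rs := by
  rw [insertT_cons, h]

lemma insertT_cons_of_eq_some {x b : ℕ} {r r' : List ℕ} (rs : List (List ℕ))
    (h : insRow x r = (r', some b)) : insertT (r :: rs) x = r' :: insertT rs b := by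
  rw [insertT_cons, h]

lemma head?_insertT (T : List (List ℕ)) (x : ℕ) :
    (insertT T x).head? = some (insRow x (T.headD [])).1 := by
  cases T with
  | nil => rfl
  | cons r rs => rw [insertT_cons]; rfl

/-- The index of the row in which `insertT T x` creates its new box. -/
def bumpDepth : List (List ℕ) → ℕ → ℕ
  | [], _ => 0
  | r :: rs, x =>
      match insRow x r with
      | (_, none) => 0
      | (_, some b) => bumpDepth rs b + 1

lemma bumpDepth_cons_of_eq_none {x : ℕ} {r r' : List ℕ} (rs : List (List ℕ))
    (h : insRow x r = (r', none)) : bumpDepth (r :: rs) x = 0 := by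
  rw [bumpDepth, h]

lemma bumpDepth_cons_of_eq_some {x b : ℕ} {r r' : List ℕ} (rs : List (List ℕ))
    (h : insRow x r = (r', some b)) : bumpDepth (r :: rs) x = bumpDepth rs b + 1 := by
  rw [bumpDepth, h]

lemma bumpDepth_le_length (T : List (List ℕ)) (x : ℕ) : bumpDepth T x ≤ T.length := by
  induction T generalizing x with
  | nil => simp [bumpDepth]
  | cons r rs ih =>
    rcases h : insRow x r with ⟨r', _ | b⟩
    · simp [bumpDepth_cons_of_eq_none _ h]
    · simpa [bumpDepth_cons_of_eq_some _ h] using ih b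

lemma bumpDepth_eq_zero_of_forall_le {T : List (List ℕ)} {v : ℕ}
    (hall : ∀ y ∈ T.flatten, y ≤ v) : bumpDepth T v = 0 := by
  cases T with
  | nil => rfl
  | cons r rs =>
    exact bumpDepth_cons_of_eq_none _ (insRow_of_forall_le fun a ha => hall a (by simp [ha]))

lemma shape_insertT (T : List (List ℕ)) (x : ℕ) :
    shape (insertT T x) = addBox (shape T) (bumpDepth T x) := by
  induction T generalizing x with
  | nil => rfl
  | cons r rs ih =>
    rcases h : insRow x r with ⟨r', _ | b⟩
    · obtain ⟨rfl, _⟩ := insRow_eq_none h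
      simp [insertT_cons_of_eq_none _ h, bumpDepth_cons_of_eq_none _ h, addBox]
    · obtain ⟨_, rfl, _⟩ := insRow_eq_some h
      simp [insertT_cons_of_eq_some _ h, bumpDepth_cons_of_eq_some _ h, addBox, ih]

lemma flatten_insertT_perm (T : List (List ℕ)) (x : ℕ) :
    (insertT T x).flatten.Perm (x :: T.flatten) := by
  induction T generalizing x with
  | nil => simp [insertT]
  | cons r rs ih =>
    rcases h : insRow x r with ⟨r', _ | b⟩
    · obtain ⟨rfl, _⟩ := insRow_eq_none h
      rw [insertT_cons_of_eq_none _ h]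
      simp [List.perm_middle]
    · obtain ⟨hp, rfl, rfl, _⟩ := insRow_eq_some h
      rw [insertT_cons_of_eq_some _ h, List.flatten_cons, List.flatten_cons]
      refine ((ih _).append_left _).trans ?_
      simpa using (set_append_getD_perm x hp).append_right rs.flatten

/-! ### Standard tableaux -/

/-- `s` may stand directly below `r` in a tableau with strictly increasing columns. -/
def RowAbove (r s : List ℕ) : Prop :=
  s.length ≤ r.length ∧ ∀ k < s.length, r.getD k 0 < s.getD k 0

/-- A standard tableau whose entries form an arbitrary finite set, not necessarily `{1, …, n}`. -/
structure IsStdTab (T : List (List ℕ)) : Prop where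
  nodup : T.flatten.Nodup
  row_ne_nil : ∀ row ∈ T, row ≠ []
  row_sorted : ∀ row ∈ T, row.Pairwise (· < ·)
  chain : T.IsChain RowAbove

lemma IsStdTab.nil : IsStdTab [] := ⟨List.nodup_nil, by simp, by simp, .nil⟩

lemma IsStdTab.tail {r : List ℕ} {rs : List (List ℕ)} (h : IsStdTab (r :: rs)) :
    IsStdTab rs :=
  ⟨(List.nodup_append.mp h.nodup).2.1, fun row hr => h.row_ne_nil row (.tail _ hr),
    fun row hr => h.row_sorted row (.tail _ hr), h.chain.tail⟩

lemma RowAbove.append_singleton {r s : List ℕ} (h : RowAbove r s) (x : ℕ) :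
    RowAbove (r ++ [x]) s :=
  ⟨by simpa using h.1.trans (Nat.le_succ _),
    fun k hk => by rw [List.getD_append _ _ _ _ (by have := h.1; omega)]; exact h.2 k hk⟩

lemma RowAbove.insRow_bump {r s r' : List ℕ} {x b : ℕ} (hr : r.Pairwise (· < ·))
    (hrs : RowAbove r s) (hI : insRow x r = (r', some b)) : RowAbove r' (insRow b s).1 := by
  obtain ⟨hp, rfl, hb, hxb, -⟩ := insRow_eq_some hI
  generalize bumpPos x r = p at hp hb
  have hr_lt_b : ∀ k < p, r.getD k 0 < b := fun k hk => hb ▸ getD_lt_getD_of_pairwise hr hk hp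
  rcases hI' : insRow b s with ⟨s', _ | c⟩
  · obtain ⟨rfl, hs_le⟩ := insRow_eq_none hI'
    have hsp : s.length ≤ p := by
      by_contra! hc
      have := hs_le _ (getD_mem_of_lt s hc)
      have := hrs.2 p hc
      omega
    refine ⟨by simp; omega, fun k hk => ?_⟩
    simp only [List.length_append, List.length_singleton] at hk
    rw [getD_set_of_lt (by omega)]
    rcases Nat.lt_or_ge k s.length with hk' | hk'
    · rw [List.getD_append _ _ _ _ hk', if_neg (by omega)]
      exact hrs.2 k hk'
    · obtain rfl : k = s.length := by omega
      rw [show (s ++ [b]).getD s.length 0 = b by simp]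
      split_ifs with hpk
      · exact hxb
      · exact hr_lt_b _ (by omega)
  · obtain ⟨hq, rfl, -, -, hs_le⟩ := insRow_eq_some hI'
    generalize bumpPos b s = q at hq hs_le
    have hqp : q ≤ p := by
      by_contra! hc
      have := hs_le p hc
      have := hrs.2 p (by omega)
      omega
    refine ⟨by simpa using hrs.1, fun k hk => ?_⟩
    simp only [List.length_set] at hk
    rw [getD_set_of_lt (by have := hrs.1; omega), getD_set_of_lt hk]
    have := hrs.2 k hk
    split_ifs with hpk hqk hqk
    · exact hxb
    · subst hpk; omega
    · exact hr_lt_b k (by omega)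
    · exact this

lemma IsStdTab.rowAbove_headD {r : List ℕ} {rs : List (List ℕ)} (h : IsStdTab (r :: rs)) :
    RowAbove r (rs.headD []) := by
  cases rs with
  | nil => exact ⟨by simp, by simp⟩
  | cons s rs => exact (List.isChain_cons_cons.mp h.chain).1

lemma IsStdTab.cons {r : List ℕ} {rs : List (List ℕ)} (hnd : (r :: rs).flatten.Nodup)
    (hne : r ≠ []) (hsort : r.Pairwise (· < ·)) (habove : RowAbove r (rs.headD []))
    (hrs : IsStdTab rs) : IsStdTab (r :: rs) := by
  refine ⟨hnd, ?_, ?_, List.isChain_cons.mpr ⟨fun u hu => ?_, hrs.chain⟩⟩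
  · simpa [hne] using hrs.row_ne_nil
  · simpa [hsort] using hrs.row_sorted
  · cases rs with
    | nil => simp at hu
    | cons s rs => simp_all

lemma isStdTab_insertT {T : List (List ℕ)} {x : ℕ} (h : IsStdTab T) (hx : x ∉ T.flatten) :
    IsStdTab (insertT T x) := by
  have hnd : (insertT T x).flatten.Nodup :=
    (flatten_insertT_perm T x).nodup_iff.mpr (List.nodup_cons.mpr ⟨hx, h.nodup⟩)
  induction T generalizing x with
  | nil => exact .cons hnd (by simp) (by simp) ⟨by simp, by simp⟩ .nil
  | cons r rs ih =>
    have hsort := h.row_sorted r (by simp)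
    have hxr : x ∉ r := fun hc => hx (by simp [hc])
    rcases hI : insRow x r with ⟨r', _ | b⟩
    · obtain ⟨rfl, hle⟩ := insRow_eq_none hI
      rw [insertT_cons_of_eq_none _ hI] at hnd ⊢
      refine .cons hnd (by simp) ?_ (h.rowAbove_headD.append_singleton x) h.tail
      exact List.pairwise_append.mpr ⟨hsort, by simp, fun a ha _ hb =>
        (List.mem_singleton.mp hb) ▸ lt_of_le_of_ne (hle a ha) (fun e => hxr (e ▸ ha))⟩
    · obtain ⟨hp, rfl, hb, hxb, hle⟩ := insRow_eq_some hI
      rw [insertT_cons_of_eq_some _ hI] at hnd ⊢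
      have hbr : b ∈ r := hb ▸ getD_mem_of_lt r hp
      have hbrs : b ∉ rs.flatten := fun hc =>
        List.disjoint_of_nodup_append h.nodup hbr hc
      have hrs' := ih h.tail hbrs ((List.nodup_append.mp hnd).2.1)
      refine .cons hnd (by simpa using List.ne_nil_of_mem hbr) ?_ ?_ hrs'
      · refine pairwise_lt_set hsort (fun k hk => ?_) (hb ▸ hxb)
        exact lt_of_le_of_ne (hle k hk) (fun e => hxr (e ▸ getD_mem_of_lt r (by omega)))
      · rw [List.headD_eq_head?_getD, head?_insertT]
        exact h.rowAbove_headD.insRow_bump hsort hI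

/-! ### Restriction to small entries -/

lemma restrict_cons_of_eq_nil {m : ℕ} {r : List ℕ} (T : List (List ℕ))
    (h : r.filter (· ≤ m) = []) : restrict m (r :: T) = restrict m T := by
  simp [restrict, h]

lemma restrict_cons_of_ne_nil {m : ℕ} {r : List ℕ} (T : List (List ℕ))
    (h : r.filter (· ≤ m) ≠ []) :
    restrict m (r :: T) = r.filter (· ≤ m) :: restrict m T := by
  simp [restrict, h]

lemma restrict_eq_nil_of_forall_lt {m : ℕ} {T : List (List ℕ)}
    (h : ∀ y ∈ T.flatten, m < y) : restrict m T = [] := by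
  simp only [restrict, List.filter_eq_nil_iff, List.mem_map]
  rintro _ ⟨row, hrow, rfl⟩
  simpa [List.filter_eq_nil_iff] using fun a ha => h a (List.mem_flatten.mpr ⟨row, hrow, ha⟩)

lemma IsStdTab.restrict_eq_self {m : ℕ} {T : List (List ℕ)} (h : IsStdTab T)
    (hle : ∀ y ∈ T.flatten, y ≤ m) : restrict m T = T := by
  induction T with
  | nil => rfl
  | cons r rs ih =>
    have hfr : r.filter (· ≤ m) = r := List.filter_eq_self.mpr (by simp_all)
    rw [restrict_cons_of_ne_nil _ (by rw [hfr]; exact h.row_ne_nil r (by simp)), hfr,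
      ih h.tail (fun y hy => hle y (by simp [hy]))]

lemma IsStdTab.head_lt_of_mem {r : List ℕ} {rs : List (List ℕ)} (h : IsStdTab (r :: rs))
    {y : ℕ} (hy : y ∈ rs.flatten) : r.getD 0 0 < y := by
  induction rs generalizing r with
  | nil => simp at hy
  | cons s rs ih =>
    have hs0 : r.getD 0 0 < s.getD 0 0 :=
      h.rowAbove_headD.2 0 (List.length_pos_iff.mpr (h.row_ne_nil s (by simp)))
    rcases List.mem_append.mp (List.flatten_cons ▸ hy) with hy | hy
    · obtain ⟨k, hk, rfl⟩ := List.getElem_of_mem hy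
      rcases Nat.eq_zero_or_pos k with rfl | hk0
      · rwa [List.getD_eq_getElem s 0 hk] at hs0
      · have := getD_lt_getD_of_pairwise (h.row_sorted s (by simp)) hk0 hk
        rw [List.getD_eq_getElem _ _ hk] at this
        omega
    · exact hs0.trans (ih h.tail hy)

lemma IsStdTab.restrict_eq_nil {m : ℕ} {r : List ℕ} {rs : List (List ℕ)}
    (h : IsStdTab (r :: rs)) (hr : r.filter (· ≤ m) = []) : restrict m (r :: rs) = [] := by
  have hm : m < r.getD 0 0 := by
    have := List.filter_eq_nil_iff.mp hr _
      (getD_mem_of_lt r (List.length_pos_iff.mpr (h.row_ne_nil r (by simp))))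
    simpa using this
  rw [restrict_cons_of_eq_nil _ hr]
  exact restrict_eq_nil_of_forall_lt fun y hy => hm.trans (h.head_lt_of_mem hy)

lemma insRow_filter_of_lt {x m : ℕ} (hm : m < x) (r : List ℕ) :
    (insRow x r).1.filter (· ≤ m) = r.filter (· ≤ m) ∧ ∀ b ∈ (insRow x r).2, m < b := by
  induction r with
  | nil => simp [insRow, hm]
  | cons a as ih =>
    rw [insRow_cons]
    split_ifs with hax
    · exact ⟨by simp only [List.filter_cons, ih.1], ih.2⟩
    · refine ⟨by simp [List.filter_cons, Nat.not_le.mpr hm]; omega, fun b hb => ?_⟩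
      simp only [Option.mem_def, Option.some.injEq] at hb
      omega

lemma insRow_filter_of_le {x m : ℕ} (hx : x ≤ m) {r : List ℕ} (hs : r.Pairwise (· < ·)) :
    insRow x (r.filter (· ≤ m)) =
      ((insRow x r).1.filter (· ≤ m), (insRow x r).2.filter (· ≤ m)) := by
  induction r with
  | nil => simp [insRow, hx]
  | cons a as ih =>
    rw [List.pairwise_cons] at hs
    rw [insRow_cons]
    by_cases hax : a ≤ x
    · simp [hax, hax.trans hx, insRow_cons, ih hs.2]
    · by_cases ham : a ≤ m
      · simp [hax, ham, hx, insRow_cons, Option.filter]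
      · have has : as.filter (· ≤ m) = [] :=
          List.filter_eq_nil_iff.mpr fun b hb => by have := hs.1 b hb; simp; omega
        simp [hax, ham, hx, has, insRow, Option.filter]

lemma restrict_cons_congr {m : ℕ} {r r' : List ℕ} {T T' : List (List ℕ)}
    (hr : r.filter (· ≤ m) = r'.filter (· ≤ m)) (hT : restrict m T = restrict m T') :
    restrict m (r :: T) = restrict m (r' :: T') := by
  by_cases h : r.filter (· ≤ m) = []
  · rw [restrict_cons_of_eq_nil _ h, restrict_cons_of_eq_nil _ (hr ▸ h), hT]
  · rw [restrict_cons_of_ne_nil _ h, restrict_cons_of_ne_nil _ (hr ▸ h), hr, hT]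

lemma restrict_insertT_of_lt {x m : ℕ} (hm : m < x) (T : List (List ℕ)) :
    restrict m (insertT T x) = restrict m T := by
  induction T generalizing x with
  | nil => exact restrict_eq_nil_of_forall_lt (by simp [insertT, hm])
  | cons r rs ih =>
    obtain ⟨hfilter, hbump⟩ := insRow_filter_of_lt hm r
    rcases hI : insRow x r with ⟨r', _ | b⟩ <;> rw [hI] at hfilter hbump
    · rw [insertT_cons_of_eq_none _ hI]
      exact restrict_cons_congr hfilter rfl
    · rw [insertT_cons_of_eq_some _ hI]
      exact restrict_cons_congr hfilter (ih (hbump b rfl))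

lemma mem_insRow_fst (x : ℕ) (r : List ℕ) : x ∈ (insRow x r).1 := by
  induction r with
  | nil => simp [insRow]
  | cons a as ih => rw [insRow_cons]; split_ifs <;> simp [ih]

lemma IsStdTab.restrict_insertT_of_le {T : List (List ℕ)} {x m : ℕ} (h : IsStdTab T)
    (hx : x ≤ m) : restrict m (insertT T x) = insertT (restrict m T) x := by
  induction T generalizing x with
  | nil => simp [insertT, restrict, hx]
  | cons r rs ih =>
    have hrow := insRow_filter_of_le hx (h.row_sorted r (by simp))
    have hrhs : insertT (restrict m (r :: rs)) x =
        (insRow x r).1.filter (· ≤ m) :: match (insRow x r).2.filter (· ≤ m) with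
          | none => restrict m rs
          | some b => insertT (restrict m rs) b := by
      by_cases hf : r.filter (· ≤ m) = []
      · have hrs : restrict m rs = [] := restrict_cons_of_eq_nil rs hf ▸ h.restrict_eq_nil hf
        rw [hf] at hrow
        obtain ⟨h1, h2⟩ := Prod.mk.inj (hrow : ([x], none) = _)
        rw [h.restrict_eq_nil hf, hrs, ← h1, ← h2]
        rfl
      · rw [restrict_cons_of_ne_nil _ hf, insertT_cons, hrow]
    have hr' : (insRow x r).1.filter (· ≤ m) ≠ [] := by
      rw [← show (insRow x (r.filter (· ≤ m))).1 = (insRow x r).1.filter (· ≤ m) from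
        congrArg Prod.fst hrow]
      exact List.ne_nil_of_mem (mem_insRow_fst x _)
    rw [hrhs, insertT_cons, restrict_cons_of_ne_nil _ hr']
    congr 1
    rcases (insRow x r).2 with _ | b
    · rfl
    · by_cases hb : b ≤ m
      · simp [Option.filter, hb, ih h.tail hb]
      · simp [Option.filter, hb, restrict_insertT_of_lt (Nat.lt_of_not_le hb)]

lemma eq_filter_append_of_max {r : List ℕ} {m : ℕ} (hs : r.Pairwise (· < ·)) (hv : m + 1 ∈ r)
    (hmax : ∀ a ∈ r, a ≤ m + 1) : r = r.filter (· ≤ m) ++ [m + 1] := by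
  induction r with
  | nil => simp at hv
  | cons a as ih =>
    rw [List.pairwise_cons] at hs
    by_cases ha : a = m + 1
    · subst ha
      obtain rfl : as = [] := List.eq_nil_iff_forall_not_mem.mpr fun b hb => by
        have := hs.1 b hb; have := hmax b (by simp [hb]); omega
      simp
    · have ham : a ≤ m := by have := hmax a (by simp); omega
      simp only [List.filter_cons, ham, decide_true, if_true, List.cons_append]
      exact congrArg (a :: ·) (ih hs.2 (by simpa [Ne.symm ha] using hv)
        fun b hb => hmax b (by simp [hb]))

lemma IsStdTab.eq_appendToRow_restrict {T : List (List ℕ)} {m : ℕ} (h : IsStdTab T)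
    (hv : m + 1 ∈ T.flatten) (hmax : ∀ y ∈ T.flatten, y ≤ m + 1) :
    ∃ d ≤ (restrict m T).length, T = appendToRow (restrict m T) d (m + 1) := by
  induction T with
  | nil => simp at hv
  | cons r rs ih =>
    have hrmax : ∀ a ∈ r, a ≤ m + 1 := fun a ha => hmax a (by simp [ha])
    by_cases hvr : m + 1 ∈ r
    · have hr := eq_filter_append_of_max (h.row_sorted r (by simp)) hvr hrmax
      have hrs : restrict m rs = rs := h.tail.restrict_eq_self fun y hy => by
        have := hmax y (by simp [hy])
        have : y ≠ m + 1 := fun e => List.disjoint_of_nodup_append h.nodup hvr (e ▸ hy)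
        omega
      refine ⟨0, Nat.zero_le _, ?_⟩
      by_cases hf : r.filter (· ≤ m) = []
      · rw [hf, List.nil_append] at hr
        obtain rfl : rs = [] := by
          rcases rs with _ | ⟨s, rs⟩
          · rfl
          · obtain ⟨y, hy⟩ := List.exists_mem_of_ne_nil s (h.row_ne_nil s (by simp))
            have hlt := h.head_lt_of_mem (y := y) (by simp [hy])
            rw [hr] at hlt
            have := hmax y (by simp [hy])
            simp at hlt
            omega
        rw [restrict_cons_of_eq_nil _ hf, hr]
        rfl
      · rw [restrict_cons_of_ne_nil _ hf, hrs, appendToRow, ← hr]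
    · have hfr : r.filter (· ≤ m) = r := List.filter_eq_self.mpr fun a ha => by
        have := hrmax a ha
        have : a ≠ m + 1 := fun e => hvr (e ▸ ha)
        simp; omega
      obtain ⟨d, hd, he⟩ :=
        ih h.tail (by simpa [hvr] using hv) fun y hy => hmax y (by simp [hy])
      rw [restrict_cons_of_ne_nil _ (by rw [hfr]; exact h.row_ne_nil r (by simp)), hfr]
      exact ⟨d + 1, by simpa using hd, by rw [appendToRow, ← he]⟩

lemma bumpDepth_appendToRow {T : List (List ℕ)} {d x v : ℕ}
    (hall : ∀ y ∈ T.flatten, y < v) (hx : x < v) (hd : d ≤ T.length) :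
    bumpDepth (appendToRow T d v) x =
      if bumpDepth T x = d then bumpDepth T x + 1 else bumpDepth T x := by
  induction T generalizing d x with
  | nil =>
    obtain rfl : d = 0 := by simpa using hd
    simp [appendToRow, bumpDepth, insRow, Nat.not_le.mpr hx]
  | cons r rs ih =>
    have hallr : ∀ a ∈ r, a < v := fun a ha => hall a (by simp [ha])
    have hallrs : ∀ y ∈ rs.flatten, y < v := fun y hy => hall y (by simp [hy])
    rcases hI : insRow x r with ⟨r', _ | b⟩
    · have hxr := (insRow_eq_none hI).2
      rw [bumpDepth_cons_of_eq_none _ hI]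
      cases d with
      | zero =>
        rw [appendToRow, bumpDepth_cons_of_eq_some _ (insRow_append_singleton_of_forall_le hxr hx),
          bumpDepth_eq_zero_of_forall_le fun y hy => (hallrs y hy).le]
        simp
      | succ d => simp [appendToRow, bumpDepth_cons_of_eq_none _ hI]
    · obtain ⟨hp, -, hb, -⟩ := insRow_eq_some hI
      have hbv : b < v := hallr b (hb ▸ getD_mem_of_lt r hp)
      rw [bumpDepth_cons_of_eq_some _ hI]
      cases d with
      | zero =>
        rw [appendToRow, bumpDepth_cons_of_eq_some _ (insRow_append_singleton_of_eq_some hI)]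
        simp
      | succ d =>
        rw [appendToRow, bumpDepth_cons_of_eq_some _ hI, ih hallrs hbv (by simpa using hd)]
        split_ifs <;> omega

/-! ### Growth diagrams -/

/-- Fomin's local rule: the shape at the corner `(i+1, j+1)` of a growth diagram from the shapes
`lam` at `(i, j)`, `mu` at `(i, j+1)`, `nu` at `(i+1, j)`, and whether `(i+1, j+1)` is a point of
the permutation. -/
def localRule (lam mu nu : List ℕ) (isPoint : Bool) : List ℕ :=
  if isPoint then addBox lam 0
  else if mu = lam then nu
  else if nu = lam then mu
  else if mu = nu then addBox mu (firstDiff lam mu + 1)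
  else rowwiseMax mu nu

lemma localRule_comm (lam mu nu : List ℕ) (isPoint : Bool) :
    localRule lam mu nu isPoint = localRule lam nu mu isPoint := by
  unfold localRule
  cases isPoint
  · by_cases h₁ : mu = lam
    · subst h₁; split_ifs <;> simp_all
    by_cases h₂ : nu = lam
    · subst h₂; simp [h₁]
    by_cases h₃ : mu = nu
    · subst h₃; rfl
    simp [h₁, h₂, h₃, Ne.symm h₃, rowwiseMax_comm]
  · rfl

lemma localRule_self_left (lam nu : List ℕ) : localRule lam lam nu false = nu := by
  simp [localRule]

lemma localRule_self_right (lam mu : List ℕ) : localRule lam mu lam false = mu := by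
  unfold localRule; split_ifs <;> simp_all

lemma localRule_addBox_addBox {lam : List ℕ} {e d : ℕ} (he : e ≤ lam.length)
    (hd : d ≤ lam.length) :
    localRule lam (addBox lam e) (addBox lam d) false =
      addBox (addBox lam d) (if e = d then e + 1 else e) := by
  simp only [localRule, Bool.false_eq_true, if_false, addBox_ne he, addBox_ne hd]
  by_cases hed : e = d
  · subst hed; simp [firstDiff_addBox he]
  · rw [if_neg (fun h => hed (eq_of_addBox_eq he hd h)), if_neg hed,
      rowwiseMax_addBox_addBox hed he hd, addBox_comm he hd]

lemma shape_insertT_appendToRow {T : List (List ℕ)} {d x v : ℕ}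
    (hall : ∀ y ∈ T.flatten, y < v) (hx : x < v) (hd : d ≤ T.length) :
    shape (insertT (appendToRow T d v) x) =
      localRule (shape T) (shape (insertT T x)) (shape (appendToRow T d v)) false := by
  rw [shape_insertT, shape_insertT, shape_appendToRow, bumpDepth_appendToRow hall hx hd,
    localRule_addBox_addBox (by simpa using bumpDepth_le_length T x) (by simpa using hd)]

def growthTab (v : ℕ → ℕ) (i : ℕ) : ℕ → List (List ℕ)
  | 0 => []
  | j + 1 => if v j ≤ i then insertT (growthTab v i j) (v j) else growthTab v i j

section GrowthDiagram

variable {v : ℕ → ℕ}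

lemma mem_flatten_growthTab {i j y : ℕ} :
    y ∈ (growthTab v i j).flatten ↔ (∃ k < j, v k = y) ∧ y ≤ i := by
  induction j with
  | zero => simp [growthTab]
  | succ j ih =>
    rw [growthTab]
    split_ifs with hj
    · rw [(flatten_insertT_perm _ _).mem_iff, List.mem_cons, ih]
      constructor
      · rintro (rfl | ⟨⟨k, hk, rfl⟩, hy⟩)
        exacts [⟨⟨j, by omega, rfl⟩, hj⟩, ⟨⟨k, by omega, rfl⟩, hy⟩]
      · rintro ⟨⟨k, hk, rfl⟩, hy⟩
        rcases Nat.lt_succ_iff_lt_or_eq.mp hk with hk | rfl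
        exacts [Or.inr ⟨⟨k, hk, rfl⟩, hy⟩, Or.inl rfl]
    · rw [ih]
      constructor
      · rintro ⟨⟨k, hk, rfl⟩, hy⟩; exact ⟨⟨k, by omega, rfl⟩, hy⟩
      · rintro ⟨⟨k, hk, rfl⟩, hy⟩
        rcases Nat.lt_succ_iff_lt_or_eq.mp hk with hk | rfl
        exacts [⟨⟨k, hk, rfl⟩, hy⟩, absurd hy hj]

lemma isStdTab_growthTab (hv : Function.Injective v) (i j : ℕ) : IsStdTab (growthTab v i j) := by
  induction j with
  | zero => exact .nil
  | succ j ih =>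
    rw [growthTab]
    split_ifs
    · refine isStdTab_insertT ih fun hmem => ?_
      obtain ⟨⟨k, hk, hkj⟩, -⟩ := mem_flatten_growthTab.mp hmem
      exact absurd (hv hkj) (by omega)
    · exact ih

lemma growthTab_zero_left (hpos : ∀ k, 0 < v k) (j : ℕ) : growthTab v 0 j = [] := by
  induction j with
  | zero => rfl
  | succ j ih => simp [growthTab, ih, (hpos j).ne']

lemma growthTab_succ_left_of_forall_ne {i j : ℕ} (h : ∀ k < j, v k ≠ i + 1) :
    growthTab v (i + 1) j = growthTab v i j := by
  induction j with
  | zero => rfl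
  | succ j ih =>
    have hj := h j (by omega)
    simp only [growthTab, ih fun k hk => h k (by omega)]
    by_cases hji : v j ≤ i
    · simp [hji, hji.trans (Nat.le_succ i)]
    · simp [hji, show ¬ v j ≤ i + 1 by omega]

lemma restrict_growthTab (hv : Function.Injective v) {m i : ℕ} (hm : m ≤ i) (j : ℕ) :
    restrict m (growthTab v i j) = growthTab v m j := by
  induction j with
  | zero => rfl
  | succ j ih =>
    simp only [growthTab]
    by_cases h₁ : v j ≤ m
    · rw [if_pos h₁, if_pos (h₁.trans hm),
        (isStdTab_growthTab hv i j).restrict_insertT_of_le h₁, ih]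
    · split_ifs
      · rw [restrict_insertT_of_lt (Nat.lt_of_not_le h₁), ih]
      · exact ih

lemma growthTab_succ_left_eq_appendToRow (hv : Function.Injective v) {i j : ℕ}
    (hex : ∃ k < j, v k = i + 1) :
    ∃ d ≤ (growthTab v i j).length,
      growthTab v (i + 1) j = appendToRow (growthTab v i j) d (i + 1) := by
  have := (isStdTab_growthTab hv (i + 1) j).eq_appendToRow_restrict (m := i)
    (mem_flatten_growthTab.mpr ⟨hex, le_rfl⟩) fun y hy => (mem_flatten_growthTab.mp hy).2
  rwa [restrict_growthTab hv (Nat.le_succ i)] at this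

lemma shape_growthTab_succ_succ (hv : Function.Injective v) (i j : ℕ) :
    shape (growthTab v (i + 1) (j + 1)) =
      localRule (shape (growthTab v i j)) (shape (growthTab v i (j + 1)))
        (shape (growthTab v (i + 1) j)) (decide (v j = i + 1)) := by
  have hlt : ∀ y ∈ (growthTab v i j).flatten, y < i + 1 := fun y hy =>
    Nat.lt_succ_of_le (mem_flatten_growthTab.mp hy).2
  by_cases hpt : v j = i + 1
  · have hnu : growthTab v (i + 1) j = growthTab v i j :=
      growthTab_succ_left_of_forall_ne fun k hk e => absurd (hv (e.trans hpt.symm)) (by omega)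
    simp only [growthTab, hpt, le_refl, if_true, hnu, decide_true, localRule, shape_insertT,
      bumpDepth_eq_zero_of_forall_le fun y hy => (hlt y hy).le]
  rw [decide_eq_false hpt]
  by_cases hgt : i + 1 < v j
  · simp only [growthTab, show ¬ v j ≤ i by omega, show ¬ v j ≤ i + 1 by omega, if_false,
      localRule_self_left]
  have hle : v j ≤ i := by omega
  simp only [growthTab, if_pos hle, if_pos (hle.trans (Nat.le_succ i))]
  by_cases hex : ∃ k < j, v k = i + 1
  · obtain ⟨d, hd, hnu⟩ := growthTab_succ_left_eq_appendToRow hv hex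
    rw [hnu, shape_insertT_appendToRow hlt (by omega) hd]
  · push Not at hex
    rw [growthTab_succ_left_of_forall_ne hex, localRule_self_right]

theorem shape_growthTab_symm {w : ℕ → ℕ} (hv : Function.Injective v)
    (hw : Function.Injective w) (hvpos : ∀ k, 0 < v k) (hwpos : ∀ k, 0 < w k)
    (hvw : ∀ i j, v j = i + 1 ↔ w i = j + 1) :
    ∀ i j, shape (growthTab v i j) = shape (growthTab w j i)
  | 0, j => by rw [growthTab_zero_left hvpos]; rfl
  | i + 1, 0 => by rw [growthTab_zero_left hwpos]; rfl
  | i + 1, j + 1 => by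
    rw [shape_growthTab_succ_succ hv, shape_growthTab_succ_succ hw,
      shape_growthTab_symm hv hw hvpos hwpos hvw i j,
      shape_growthTab_symm hv hw hvpos hwpos hvw i (j + 1),
      shape_growthTab_symm hv hw hvpos hwpos hvw (i + 1) j, localRule_comm,
      Bool.decide_congr (hvw i j)]

lemma growthTab_eq_foldl {i j : ℕ} (h : ∀ k < j, v k ≤ i) :
    growthTab v i j = ((List.range j).map v).foldl insertT [] := by
  induction j with
  | zero => rfl
  | succ j ih =>
    rw [growthTab, if_pos (h j (by omega)), ih fun k hk => h k (by omega), List.range_succ]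
    simp

end GrowthDiagram

/-! ### The recording tableau -/

lemma insPQ_eq {P Q : List (List ℕ)} (hlen : Q.length = P.length) (x lbl : ℕ) :
    insPQ P Q x lbl = (insertT P x, appendToRow Q (bumpDepth P x) lbl) := by
  induction P generalizing Q x with
  | nil => rw [List.length_eq_zero_iff.mp hlen]; rfl
  | cons r rs ih =>
    obtain ⟨q, qs, rfl⟩ := List.exists_cons_of_length_eq_add_one hlen
    rcases hI : insRow x r with ⟨r', _ | b⟩
    · rw [insPQ, hI, insertT_cons_of_eq_none _ hI, bumpDepth_cons_of_eq_none _ hI]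
      rfl
    · rw [insPQ, hI, insertT_cons_of_eq_some _ hI, bumpDepth_cons_of_eq_some _ hI]
      simp only [List.tail_cons, List.headD_cons]
      rw [ih (by simpa using hlen)]
      rfl

lemma insPQ_fst (P Q : List (List ℕ)) (x lbl : ℕ) : (insPQ P Q x lbl).1 = insertT P x := by
  induction P generalizing Q x with
  | nil => rfl
  | cons r rs ih =>
    rcases hI : insRow x r with ⟨r', _ | b⟩
    · rw [insPQ, hI, insertT_cons_of_eq_none _ hI]
    · rw [insPQ, hI, insertT_cons_of_eq_some _ hI]
      exact congrArg (r' :: ·) (ih _ _)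

lemma foldl_RSstep_fst (L : List (ℕ × ℕ)) (PQ : List (List ℕ) × List (List ℕ)) :
    (L.foldl RSstep PQ).1 = (L.map Prod.snd).foldl insertT PQ.1 := by
  induction L generalizing PQ with
  | nil => rfl
  | cons p L ih => simp only [List.foldl_cons, List.map_cons, ih, RSstep, insPQ_fst]

lemma IsStdTab.appendToRow_bumpDepth {U P : List (List ℕ)} {x m : ℕ} (hU : IsStdTab U)
    (hmem : m + 1 ∈ U.flatten) (hmax : ∀ y ∈ U.flatten, y ≤ m + 1)
    (hP : shape P = shape (restrict m U)) (hins : shape (insertT P x) = shape U) :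
    appendToRow (restrict m U) (bumpDepth P x) (m + 1) = U := by
  obtain ⟨d, hd, hUd⟩ := hU.eq_appendToRow_restrict hmem hmax
  have hshape : addBox (shape P) (bumpDepth P x) = addBox (shape P) d := by
    rw [← shape_insertT, hins, hP]
    conv_lhs => rw [hUd]
    exact shape_appendToRow _ _ _
  have hlen : P.length = (restrict m U).length := by simpa using congrArg List.length hP
  rw [eq_of_addBox_eq (by simpa using bumpDepth_le_length P x) (by simpa [hlen] using hd) hshape]
  exact hUd.symm

section Permutation

variable {n : ℕ}

/-- The word `w 1, …, w n` as a function on `ℕ`, continued injectively by `k ↦ k + 1`. -/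
def permWord (w : Equiv.Perm (Fin n)) (k : ℕ) : ℕ :=
  if h : k < n then (w ⟨k, h⟩).val + 1 else k + 1

lemma permWord_of_lt (w : Equiv.Perm (Fin n)) {k : ℕ} (h : k < n) :
    permWord w k = (w ⟨k, h⟩).val + 1 := dif_pos h

lemma permWord_pos (w : Equiv.Perm (Fin n)) (k : ℕ) : 0 < permWord w k := by
  unfold permWord; split <;> omega

lemma permWord_le (w : Equiv.Perm (Fin n)) {k : ℕ} (h : k < n) : permWord w k ≤ n := by
  rw [permWord_of_lt w h]; exact (w _).isLt

lemma permWord_injective (w : Equiv.Perm (Fin n)) : Function.Injective (permWord w) := by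
  intro a b hab
  unfold permWord at hab
  split_ifs at hab with ha hb hb
  · simpa using w.injective (Fin.ext (Nat.succ_injective hab))
  · have := (w ⟨a, ha⟩).isLt; omega
  · have := (w ⟨b, hb⟩).isLt; omega
  · omega

lemma permWord_eq_succ_iff (w : Equiv.Perm (Fin n)) (i j : ℕ) :
    permWord w j = i + 1 ↔ permWord w⁻¹ i = j + 1 := by
  unfold permWord
  split_ifs with hj hi hi
  · rw [Nat.add_right_cancel_iff, Nat.add_right_cancel_iff, ← Fin.ext_iff (b := ⟨i, hi⟩),
      ← Fin.ext_iff (b := ⟨j, hj⟩), Equiv.Perm.inv_eq_iff_eq, eq_comm]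
  · have := (w ⟨j, hj⟩).isLt; omega
  · have := (w⁻¹ ⟨i, hi⟩).isLt; omega
  · omega

lemma RS_eq_foldl (w : Equiv.Perm (Fin n)) :
    RS w = ((List.range n).map fun k => (k + 1, permWord w k)).foldl RSstep ([], []) := by
  rw [RS, ← List.map_coe_finRange_eq_range, List.map_map]
  congr 2
  funext k
  simp [permWord_of_lt w k.isLt]

lemma foldl_RSstep_range_permWord (w : Equiv.Perm (Fin n)) {j : ℕ} (hj : j ≤ n) :
    ((List.range j).map fun k => (k + 1, permWord w k)).foldl RSstep ([], []) =
      (growthTab (permWord w) n j, restrict j (growthTab (permWord w⁻¹) n n)) := by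
  have hu := permWord_injective w⁻¹
  have hsym := shape_growthTab_symm (permWord_injective w) hu (permWord_pos w)
    (permWord_pos w⁻¹) (permWord_eq_succ_iff w)
  induction j with
  | zero =>
    refine Prod.ext rfl (restrict_eq_nil_of_forall_lt fun y hy => ?_).symm
    obtain ⟨⟨k, -, rfl⟩, -⟩ := mem_flatten_growthTab.mp hy
    exact permWord_pos _ k
  | succ j ih =>
    set P := growthTab (permWord w) n j
    have hjn : j < n := by omega
    have hQ : restrict j (growthTab (permWord w⁻¹) n n) =
        restrict j (growthTab (permWord w⁻¹) (j + 1) n) := by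
      rw [restrict_growthTab hu (by omega), restrict_growthTab hu (Nat.le_succ j)]
    have hP : shape P = shape (restrict j (growthTab (permWord w⁻¹) (j + 1) n)) := by
      rw [← hQ, restrict_growthTab hu (by omega), hsym]
    have hins : insertT P (permWord w j) = growthTab (permWord w) n (j + 1) := by
      rw [growthTab, if_pos (permWord_le w hjn)]
    have hmem : j + 1 ∈ (growthTab (permWord w⁻¹) (j + 1) n).flatten := by
      have hvj := permWord_pos w j
      refine mem_flatten_growthTab.mpr ⟨⟨permWord w j - 1, ?_, ?_⟩, le_rfl⟩
      · have := permWord_le w hjn; omega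
      · exact (permWord_eq_succ_iff w _ _).mp (by omega)
    rw [List.range_succ, List.map_append, List.foldl_append, ih (by omega), hQ]
    simp only [List.map_cons, List.map_nil, List.foldl_cons, List.foldl_nil, RSstep]
    rw [insPQ_eq (by simpa using (congrArg List.length hP).symm), hins,
      (isStdTab_growthTab hu _ n).appendToRow_bumpDepth hmem
        (fun y hy => (mem_flatten_growthTab.mp hy).2) hP (by rw [hins, hsym]),
      restrict_growthTab hu (by omega)]

end Permutation

/-- For a permutation `w` of `{1,...,n}`, the insertion tableau of
`w⁻¹` equals the recording tableau of `w`: `P(w⁻¹) = Q(w)`. -/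
theorem rs_inv (n : ℕ) (w : Equiv.Perm (Fin n)) :
    (RS w⁻¹).1 = (RS w).2 := by
  have hP : (RS w⁻¹).1 = growthTab (permWord w⁻¹) n n := by
    rw [RS_eq_foldl, foldl_RSstep_fst, List.map_map,
      growthTab_eq_foldl fun k hk => permWord_le w⁻¹ hk]
    rfl
  have hQ : (RS w).2 = restrict n (growthTab (permWord w⁻¹) n n) := by
    rw [RS_eq_foldl, foldl_RSstep_range_permWord w le_rfl]
  rw [hP, hQ, (isStdTab_growthTab (permWord_injective w⁻¹) n n).restrict_eq_self
    fun y hy => (mem_flatten_growthTab.mp hy).2]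

end RSKPaper
end

section
/- Let z : ℝ_{>0} → ℝ^n be a collision path, i.e. z_1(t) < ... < z_n(t) for all t, each z_i is monotonic, lim_{t→0} z_i(t) = 0 and lim_{t→∞} z_i(t) = ∞ for all i, and lim_{t→0} z_{i+1}(t)/z_i(t) = lim_{t→∞} (z_{i+1}(t) − z_i(t)) = ∞ for all i < n. Then for fixed s ∈ (0,1], the deformed path defined by z_i(s,t) = z_i(st) for t ≤ 1 and z_i(s,t) = z_i(t−1+s) for t > 1 (for 1 ≤ i ≤ n−1), and z_n(s,t) = ((2−t)/(1−t+s))·z_n(t) for t ≤ 1 and z_n(s,t) = s^{-1} z_n(t) for t > 1, is again a collision path. -/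
/-!
The deformation moves the first `n - 1` particles along a monotone time change `τ` with
`0 < τ t ≤ t`, and multiplies the last particle by a monotone factor `c t ≥ 1`. The
coordinates of a collision path are nonnegative and increasing, so this can only push the last
particle further away from the others: ordering and both asymptotic conditions survive, and
the last particle still collides at `0` because `c` is bounded by `c 1` near `0`.
-/

open Filter

namespace GaudinPaper

/-- A collision path: `n` ordered real particles, with monotonic coordinates, which
simultaneously collide at `0` as `t → 0⁺` and at `∞` as `t → ∞`, in a specified
asymptotic order. -/
def IsCollisionPath (n : ℕ) (z : ℝ → Fin n → ℝ) : Prop :=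
  -- ordered
  (∀ t : ℝ, 0 < t → ∀ i j : Fin n, i < j → z t i < z t j) ∧
  -- monotonicity
  (∀ i : Fin n, MonotoneOn (fun t => z t i) (Set.Ioi (0 : ℝ)) ∨
    AntitoneOn (fun t => z t i) (Set.Ioi (0 : ℝ))) ∧
  -- limiting behaviour
  (∀ i : Fin n,
    Tendsto (fun t => z t i) (nhdsWithin 0 (Set.Ioi (0 : ℝ))) (nhds 0) ∧
    Tendsto (fun t => z t i) atTop atTop) ∧
  -- asymptotic ordering
  (∀ i : Fin n, ∀ h : i.val + 1 < n,
    Tendsto (fun t => z t ⟨i.val + 1, h⟩ / z t i)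
      (nhdsWithin 0 (Set.Ioi (0 : ℝ))) atTop ∧
    Tendsto (fun t => z t ⟨i.val + 1, h⟩ - z t i) atTop atTop)

/-- The deformation of a collision path: for `1 ≤ i ≤ n−1`, `z_i(s,t) = z_i(st)` for
`t ≤ 1` and `z_i(t−1+s)` for `t > 1`; and `z_n(s,t) = ((2−t)/(1−t+s))·z_n(t)` for
`t ≤ 1` and `s⁻¹ z_n(t)` for `t > 1`. -/
noncomputable def deform (n : ℕ) (z : ℝ → Fin n → ℝ) (s : ℝ) : ℝ → Fin n → ℝ :=
  fun t i =>
    if i.val + 1 = n then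
      if t ≤ 1 then ((2 - t) / (1 - t + s)) * z t i else s⁻¹ * z t i
    else
      if t ≤ 1 then z (s * t) i else z (t - 1 + s) i

open Set Topology

section CollisionPath

variable {n : ℕ} {z : ℝ → Fin n → ℝ}

/-- An antitone coordinate could not tend to `∞`. -/
theorem IsCollisionPath.monotoneOn (hz : IsCollisionPath n z) (i : Fin n) :
    MonotoneOn (fun t => z t i) (Ioi 0) := by
  refine (hz.2.1 i).resolve_right fun hanti => ?_
  obtain ⟨t, hbig, ht⟩ := (((hz.2.2.1 i).2.eventually_gt_atTop (z 1 i)).and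
    (eventually_ge_atTop (1 : ℝ))).exists
  exact (hanti (mem_Ioi.2 one_pos) (mem_Ioi.2 (one_pos.trans_le ht)) ht).not_gt hbig

theorem IsCollisionPath.nonneg (hz : IsCollisionPath n z) (i : Fin n) {t : ℝ} (ht : 0 < t) :
    0 ≤ z t i := by
  refine le_of_tendsto (hz.2.2.1 i).1 ?_
  filter_upwards [Ioo_mem_nhdsGT ht] with u hu
  exact hz.monotoneOn i hu.1 ht hu.2.le

theorem IsCollisionPath.le_mul_apply (hz : IsCollisionPath n z) (i : Fin n) {u t c : ℝ}
    (hu : 0 < u) (hut : u ≤ t) (hc : 1 ≤ c) : z u i ≤ c * z t i :=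
  (hz.monotoneOn i hu (hu.trans_le hut) hut).trans
    (le_mul_of_one_le_left (hz.nonneg i (hu.trans_le hut)) hc)

/-- Where `z t i = 0` the ratio `z t (i + 1) / z t i` is the junk value `0`. -/
theorem IsCollisionPath.eventually_pos (hz : IsCollisionPath n z) (i : Fin n)
    (hi : i.val + 1 < n) : ∀ᶠ t in 𝓝[>] 0, 0 < z t i := by
  filter_upwards [(hz.2.2.2 i hi).1.eventually_gt_atTop 0, self_mem_nhdsWithin] with t hratio ht
  refine (hz.nonneg i ht).lt_of_ne fun h => ?_
  rw [← h, div_zero] at hratio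
  exact hratio.false

end CollisionPath

noncomputable def reparamPath (n : ℕ) (z : ℝ → Fin n → ℝ) (τ c : ℝ → ℝ) : ℝ → Fin n → ℝ :=
  fun t i => if i.val + 1 = n then c t * z t i else z (τ t) i

section ReparamPath

variable {n : ℕ} {z : ℝ → Fin n → ℝ} {τ c : ℝ → ℝ} {t : ℝ} {i : Fin n}

theorem reparamPath_of_last (hi : i.val + 1 = n) : reparamPath n z τ c t i = c t * z t i :=
  if_pos hi

theorem reparamPath_of_ne_last (hi : i.val + 1 ≠ n) : reparamPath n z τ c t i = z (τ t) i :=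
  if_neg hi

theorem tendsto_nhdsGT_of_le_self (hτ0 : MapsTo τ (Ioi 0) (Ioi 0))
    (hτle : ∀ t ∈ Ioi (0 : ℝ), τ t ≤ t) : Tendsto τ (𝓝[>] 0) (𝓝[>] 0) := by
  refine tendsto_nhdsWithin_of_tendsto_nhds_of_eventually_within _ ?_
    (eventually_nhdsWithin_of_forall fun t ht => hτ0 ht)
  refine tendsto_of_tendsto_of_tendsto_of_le_of_le' tendsto_const_nhds
    (tendsto_nhdsWithin_of_tendsto_nhds tendsto_id) ?_ ?_ <;>
    filter_upwards [self_mem_nhdsWithin] with t ht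
  exacts [(hτ0 ht).le, hτle t ht]

theorem IsCollisionPath.reparamPath_lt (hz : IsCollisionPath n z)
    (hτ0 : MapsTo τ (Ioi 0) (Ioi 0)) (hτle : ∀ t ∈ Ioi (0 : ℝ), τ t ≤ t)
    (hc : ∀ t ∈ Ioi (0 : ℝ), 1 ≤ c t) (ht : 0 < t) {i j : Fin n} (hij : i < j) :
    reparamPath n z τ c t i < reparamPath n z τ c t j := by
  have hi : i.val + 1 ≠ n := by have := j.isLt; have : i.val < j.val := hij; omega
  have hlt := hz.1 _ (hτ0 ht) i j hij
  rw [reparamPath_of_ne_last hi]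
  by_cases hj : j.val + 1 = n
  · rw [reparamPath_of_last hj]
    exact hlt.trans_le (hz.le_mul_apply j (hτ0 ht) (hτle t ht) (hc t ht))
  · rwa [reparamPath_of_ne_last hj]

theorem IsCollisionPath.monotoneOn_reparamPath (hz : IsCollisionPath n z)
    (hτ0 : MapsTo τ (Ioi 0) (Ioi 0)) (hτ : MonotoneOn τ (Ioi 0))
    (hc : MonotoneOn c (Ioi 0)) (hc1 : ∀ t ∈ Ioi (0 : ℝ), 1 ≤ c t) (i : Fin n) :
    MonotoneOn (fun t => reparamPath n z τ c t i) (Ioi 0) := by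
  by_cases hi : i.val + 1 = n
  · simp only [reparamPath_of_last hi]
    exact hc.mul (hz.monotoneOn i) (fun t ht => zero_le_one.trans (hc1 t ht))
      (fun t ht => hz.nonneg i ht)
  · simp only [reparamPath_of_ne_last hi]
    exact (hz.monotoneOn i).comp hτ hτ0

theorem IsCollisionPath.tendsto_reparamPath_nhdsGT (hz : IsCollisionPath n z)
    (hτ0 : MapsTo τ (Ioi 0) (Ioi 0)) (hτle : ∀ t ∈ Ioi (0 : ℝ), τ t ≤ t)
    (hc : MonotoneOn c (Ioi 0)) (hc1 : ∀ t ∈ Ioi (0 : ℝ), 1 ≤ c t) (i : Fin n) :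
    Tendsto (fun t => reparamPath n z τ c t i) (𝓝[>] 0) (𝓝 0) := by
  by_cases hi : i.val + 1 = n
  · simp only [reparamPath_of_last hi]
    -- `c` is squeezed between `1` and `c 1` on `(0, 1]`.
    have hbound : Tendsto (fun t => c 1 * z t i) (𝓝[>] 0) (𝓝 0) := by
      simpa using (hz.2.2.1 i).1.const_mul (c 1)
    refine tendsto_of_tendsto_of_tendsto_of_le_of_le' tendsto_const_nhds hbound ?_ ?_ <;>
      filter_upwards [Ioc_mem_nhdsGT one_pos] with t ht
    · exact mul_nonneg (zero_le_one.trans (hc1 t ht.1)) (hz.nonneg i ht.1)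
    · exact mul_le_mul_of_nonneg_right (hc ht.1 (mem_Ioi.2 one_pos) ht.2) (hz.nonneg i ht.1)
  · simp only [reparamPath_of_ne_last hi]
    exact (hz.2.2.1 i).1.comp (tendsto_nhdsGT_of_le_self hτ0 hτle)

theorem IsCollisionPath.tendsto_reparamPath_atTop (hz : IsCollisionPath n z)
    (hτ : Tendsto τ atTop atTop) (hc1 : ∀ t ∈ Ioi (0 : ℝ), 1 ≤ c t) (i : Fin n) :
    Tendsto (fun t => reparamPath n z τ c t i) atTop atTop := by
  by_cases hi : i.val + 1 = n
  · simp only [reparamPath_of_last hi]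
    refine tendsto_atTop_mono' _ ?_ (hz.2.2.1 i).2
    filter_upwards [eventually_gt_atTop 0] with t ht
    exact le_mul_of_one_le_left (hz.nonneg i ht) (hc1 t ht)
  · simp only [reparamPath_of_ne_last hi]
    exact (hz.2.2.1 i).2.comp hτ

theorem IsCollisionPath.tendsto_reparamPath_div (hz : IsCollisionPath n z)
    (hτ0 : MapsTo τ (Ioi 0) (Ioi 0)) (hτle : ∀ t ∈ Ioi (0 : ℝ), τ t ≤ t)
    (hc1 : ∀ t ∈ Ioi (0 : ℝ), 1 ≤ c t) (i : Fin n) (hi : i.val + 1 < n) :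
    Tendsto (fun t => reparamPath n z τ c t ⟨i.val + 1, hi⟩ / reparamPath n z τ c t i)
      (𝓝[>] 0) atTop := by
  have hτ := tendsto_nhdsGT_of_le_self hτ0 hτle
  simp only [reparamPath_of_ne_last hi.ne]
  by_cases hlast : i.val + 1 + 1 = n
  · simp only [reparamPath_of_last (i := ⟨i.val + 1, hi⟩) hlast]
    refine tendsto_atTop_mono' _ ?_ ((hz.2.2.2 i hi).1.comp hτ)
    filter_upwards [hτ.eventually (hz.eventually_pos i hi), self_mem_nhdsWithin]
      with t hpos ht
    exact div_le_div_of_nonneg_right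
      (hz.le_mul_apply _ (hτ0 ht) (hτle t ht) (hc1 t ht)) hpos.le
  · simp only [reparamPath_of_ne_last (i := ⟨i.val + 1, hi⟩) hlast]
    exact (hz.2.2.2 i hi).1.comp hτ

theorem IsCollisionPath.tendsto_reparamPath_sub (hz : IsCollisionPath n z)
    (hτ0 : MapsTo τ (Ioi 0) (Ioi 0)) (hτle : ∀ t ∈ Ioi (0 : ℝ), τ t ≤ t)
    (hτ : Tendsto τ atTop atTop) (hc1 : ∀ t ∈ Ioi (0 : ℝ), 1 ≤ c t) (i : Fin n)
    (hi : i.val + 1 < n) :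
    Tendsto (fun t => reparamPath n z τ c t ⟨i.val + 1, hi⟩ - reparamPath n z τ c t i)
      atTop atTop := by
  simp only [reparamPath_of_ne_last hi.ne]
  by_cases hlast : i.val + 1 + 1 = n
  · simp only [reparamPath_of_last (i := ⟨i.val + 1, hi⟩) hlast]
    refine tendsto_atTop_mono' _ ?_ (hz.2.2.2 i hi).2
    filter_upwards [eventually_gt_atTop 0] with t ht
    exact sub_le_sub (hz.le_mul_apply _ ht le_rfl (hc1 t ht))
      (hz.monotoneOn i (hτ0 ht) ht (hτle t ht))
  · simp only [reparamPath_of_ne_last (i := ⟨i.val + 1, hi⟩) hlast]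
    exact (hz.2.2.2 i hi).2.comp hτ

theorem IsCollisionPath.reparamPath (hz : IsCollisionPath n z)
    (hτ0 : MapsTo τ (Ioi 0) (Ioi 0)) (hτle : ∀ t ∈ Ioi (0 : ℝ), τ t ≤ t)
    (hτ : MonotoneOn τ (Ioi 0)) (hτtop : Tendsto τ atTop atTop)
    (hc : MonotoneOn c (Ioi 0)) (hc1 : ∀ t ∈ Ioi (0 : ℝ), 1 ≤ c t) :
    IsCollisionPath n (reparamPath n z τ c) :=
  ⟨fun _ ht _ _ hij => hz.reparamPath_lt hτ0 hτle hc1 ht hij,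
    fun i => .inl (hz.monotoneOn_reparamPath hτ0 hτ hc hc1 i),
    fun i => ⟨hz.tendsto_reparamPath_nhdsGT hτ0 hτle hc hc1 i,
      hz.tendsto_reparamPath_atTop hτtop hc1 i⟩,
    fun i hi => ⟨hz.tendsto_reparamPath_div hτ0 hτle hc1 i hi,
      hz.tendsto_reparamPath_sub hτ0 hτle hτtop hc1 i hi⟩⟩

end ReparamPath

noncomputable def deformTime (s t : ℝ) : ℝ := if t ≤ 1 then s * t else t - 1 + s

noncomputable def deformScale (s t : ℝ) : ℝ := if t ≤ 1 then (2 - t) / (1 - t + s) else s⁻¹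

theorem deform_eq_reparamPath (n : ℕ) (z : ℝ → Fin n → ℝ) (s : ℝ) :
    deform n z s = reparamPath n z (deformTime s) (deformScale s) := by
  funext t i
  simp only [deform, reparamPath, deformTime, deformScale]
  split_ifs <;> rfl

section DeformParameters

variable {s : ℝ}

theorem deformTime_pos (hs : 0 < s) : MapsTo (deformTime s) (Ioi 0) (Ioi 0) := by
  intro t ht
  simp only [deformTime, mem_Ioi] at ht ⊢
  split_ifs with h
  · exact mul_pos hs ht
  · linarith

theorem deformTime_le_self (hs : s ≤ 1) : ∀ t ∈ Ioi (0 : ℝ), deformTime s t ≤ t := by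
  intro t ht
  simp only [deformTime]
  split_ifs
  · exact mul_le_of_le_one_left (le_of_lt ht) hs
  · linarith

theorem deformTime_monotone (hs : 0 ≤ s) : Monotone (deformTime s) := by
  intro a b hab
  simp only [deformTime]
  split_ifs with ha hb hb <;> nlinarith

theorem tendsto_deformTime_atTop (s : ℝ) : Tendsto (deformTime s) atTop atTop := by
  refine (tendsto_atTop_add_const_right atTop (s - 1) tendsto_id).congr' ?_
  filter_upwards [eventually_gt_atTop 1] with t ht
  simp only [deformTime, if_neg (not_le.2 ht), id]
  ring

theorem one_le_deformScale (hs0 : 0 < s) (hs1 : s ≤ 1) (t : ℝ) : 1 ≤ deformScale s t := by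
  simp only [deformScale]
  split_ifs with ht
  · rw [le_div_iff₀ (by linarith)]
    linarith
  · exact one_le_inv₀ hs0 |>.2 hs1

theorem deformScale_monotone (hs0 : 0 < s) (hs1 : s ≤ 1) : Monotone (deformScale s) := by
  intro a b hab
  simp only [deformScale]
  split_ifs with ha hb hb
  · rw [div_le_div_iff₀ (by linarith) (by linarith)]
    nlinarith
  · rw [div_le_iff₀ (by linarith), inv_mul_eq_div, le_div_iff₀ hs0]
    nlinarith
  · linarith
  · rfl

end DeformParameters

/-- For a collision path `z` and fixed `s ∈ (0, 1]`, the deformed path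
`z(s, ·)` is again a collision path. -/
theorem deform_isCollisionPath (n : ℕ) (z : ℝ → Fin n → ℝ)
    (hz : IsCollisionPath n z) (s : ℝ) (hs0 : 0 < s) (hs1 : s ≤ 1) :
    IsCollisionPath n (deform n z s) := by
  rw [deform_eq_reparamPath]
  exact hz.reparamPath (deformTime_pos hs0) (deformTime_le_self hs1)
    ((deformTime_monotone hs0.le).monotoneOn _) (tendsto_deformTime_atTop s)
    ((deformScale_monotone hs0 hs1).monotoneOn _) fun t _ => one_le_deformScale hs0 hs1 t

end GaudinPaper
end
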